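/- Let k ≥ 1 and let (U,σ) be a guarded structure over (Σ,𝔇) such that |σ(𝔇)| ≥ k+1 and σ(R) ≠ ∅ for at least one R ∈ Σ. Then tw(σ) ≤ k if and only if (U,σ) ⊨_{Δ_tw^k} A_k(). -/

import Mathlib

set_option maxHeartbeats 800000

/-- A finite relational signature with constant symbols. -/
structure Signature where
  Rel : Type
  arity : Rel → ℕ
  Const : Type
  finRel : Finite Rel
  finConst : Finite Const

/-- An interpretation of the signature `Sg` in the universe `U`: each relation
symbol is mapped to a finite set of tuples and each constant to an element. -/
structure Interp (Sg : Signature) (U : Type) where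
  rel : (R : Sg.Rel) → Set (Fin (Sg.arity R) → U)
  rel_finite : ∀ R, (rel R).Finite
  const : Sg.Const → U

/-- A structure over `(Σ,𝔇)`: an interpretation of `Σ` together with the
interpretation of the distinguished unary relation symbol `𝔇`. -/
structure InterpD (Sg : Signature) (U : Type) extends Interp Sg U where
  D : Set U
  D_finite : D.Finite

/-- The set `Rel(σ)` of elements occurring in some tuple of some relation. -/
def RelSet {Sg : Signature} {U : Type} (σ : Interp Sg U) : Set U :=
  {u | ∃ (R : Sg.Rel) (g : Fin (Sg.arity R) → U), g ∈ σ.rel R ∧ ∃ i, g i = u}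

/-- The domain `Dom(σ)`: elements occurring in relations or denoted by constants. -/
def Interp.domSet {Sg : Signature} {U : Type} (σ : Interp Sg U) : Set U :=
  RelSet σ ∪ Set.range σ.const

/-- A structure is guarded iff every element occurring in a relation tuple
belongs to `σ(𝔇)`. -/
def InterpD.Guarded {Sg : Signature} {U : Type} (σ : InterpD Sg U) : Prop :=
  RelSet σ.toInterp ⊆ σ.D

/-- A finite rooted tree, given by a parent function. -/
structure RTree where
  N : Type
  finN : Finite N
  root : N
  parent : N → N
  parent_root : parent root = root
  reach : ∀ n, ∃ m : ℕ, parent^[m] n = root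

/-- `m` is a child of `n`. -/
def RTree.IsChild (T : RTree) (m n : T.N) : Prop := T.parent m = n ∧ m ≠ n

/-- A leaf is a node with no children. -/
def RTree.IsLeaf (T : RTree) (n : T.N) : Prop := ∀ m, ¬ T.IsChild m n

/-- `n` is a descendant of `m` (belongs to the subtree rooted at `m`). -/
def RTree.Desc (T : RTree) (n m : T.N) : Prop := ∃ j : ℕ, T.parent^[j] n = m

/-- The set `S` of nodes induces a connected subtree. -/
def RTree.ConnSubtree (T : RTree) (S : Set T.N) : Prop :=
  S.Nonempty → ∃ t ∈ S, ∀ n ∈ S, ∃ m : ℕ,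
    T.parent^[m] n = t ∧ ∀ j ≤ m, T.parent^[j] n ∈ S

/-- A tree decomposition of the structure given by the interpretation `σ`
(and, in the `(Σ,𝔇)` case, the interpretation `D` of the unary symbol `𝔇`;
for structures over a plain signature take `D = ∅`). -/
structure TreeDecomp {Sg : Signature} {U : Type} (σ : Interp Sg U) (D : Set U) where
  tree : RTree
  bag : tree.N → Finset U
  covers : ∀ (R : Sg.Rel) (g : Fin (Sg.arity R) → U), g ∈ σ.rel R → ∃ n, ∀ i, g i ∈ bag n
  coversD : ∀ u ∈ D, ∃ n, u ∈ bag n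
  conn : ∀ u : U, tree.ConnSubtree {n | u ∈ bag n}

/-- The width of a tree decomposition: `max_n |λ(n)| - 1`. -/
noncomputable def TreeDecomp.width {Sg : Signature} {U : Type} {σ : Interp Sg U} {D : Set U}
    (T : TreeDecomp σ D) : ℕ :=
  (⨆ n, (T.bag n).card) - 1

/-- A leaf `n` witnesses the tuple `t.2 ∈ σ(t.1)` iff its bag contains all
elements of the tuple. -/
def TreeDecomp.Witnesses {Sg : Signature} {U : Type} {σ : Interp Sg U} {D : Set U}
    (T : TreeDecomp σ D) (n : T.tree.N) (t : (R : Sg.Rel) × (Fin (Sg.arity R) → U)) : Prop :=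
  t.2 ∈ σ.rel t.1 ∧ ∀ i, t.2 i ∈ T.bag n

/-- A tree decomposition of width `k` is reduced (Def. of reduced tree decompositions). -/
def TreeDecomp.IsReduced {Sg : Signature} {U : Type} {σ : Interp Sg U} {D : Set U}
    (k : ℕ) (T : TreeDecomp σ D) : Prop :=
  -- (1) every tuple has a witnessing leaf
  (∀ (R : Sg.Rel) (g : Fin (Sg.arity R) → U), g ∈ σ.rel R →
      ∃ n, T.tree.IsLeaf n ∧ T.Witnesses n ⟨R, g⟩) ∧
  -- (2) each leaf witnesses exactly one tuple
  (∀ n, T.tree.IsLeaf n → ∃! t : (R : Sg.Rel) × (Fin (Sg.arity R) → U), T.Witnesses n t) ∧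
  -- (3) each node has at most two children
  (∀ n m₁ m₂ m₃ : T.tree.N, T.tree.IsChild m₁ n → T.tree.IsChild m₂ n → T.tree.IsChild m₃ n →
      m₁ = m₂ ∨ m₁ = m₃ ∨ m₂ = m₃) ∧
  -- (4) the two children of a binary node carry the same bag as their parent
  (∀ n m₁ m₂ : T.tree.N, T.tree.IsChild m₁ n → T.tree.IsChild m₂ n → m₁ ≠ m₂ →
      T.bag n = T.bag m₁ ∧ T.bag n = T.bag m₂) ∧
  -- (5) all bags have exactly k+1 elements
  (∀ n, (T.bag n).card = k + 1) ∧
  -- (6) a unary node agrees with its child, or they differ by exactly one element each way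
  (∀ n m : T.tree.N, T.tree.IsChild m n → (∀ m', T.tree.IsChild m' n → m' = m) →
      T.bag n = T.bag m ∨
        (((T.bag n : Set U) \ (T.bag m : Set U)).ncard = 1 ∧
         ((T.bag m : Set U) \ (T.bag n : Set U)).ncard = 1))

/-- Tree decompositions of a structure over `(Σ,𝔇)`. -/
abbrev TreeDecompD {Sg : Signature} {U : Type} (σ : InterpD Sg U) :=
  TreeDecomp σ.toInterp σ.D
/-- Formulas of the separation logic of relations `SLR` over the signature
`(Σ,𝔇)`, with predicate symbols from `P` (of arities `ar`); first-order
variables are natural numbers. -/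
inductive SLRForm (Sg : Signature) (P : Type) (ar : P → ℕ) : Type
  | rel (R : Sg.Rel) (args : Fin (Sg.arity R) → ℕ)
  | datom (y : ℕ)
  | pred (p : P) (args : Fin (ar p) → ℕ)
  | star (φ ψ : SLRForm Sg P ar)
  | ex (y : ℕ) (φ : SLRForm Sg P ar)

/-- A set of inductive definitions (SID): a set of rules `p(x_0,…,x_{ar p - 1}) ← ρ`
for each predicate symbol `p`; the body `ρ` uses the variables `0,…,ar p - 1` as
formal parameters. -/
structure SID (Sg : Signature) where
  P : Type
  ar : P → ℕ
  rules : (p : P) → Set (SLRForm Sg P ar)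

/-- An SID is finite: finitely many predicates and finitely many rules. -/
def SID.IsFinite {Sg : Signature} (Δ : SID Sg) : Prop :=
  Finite Δ.P ∧ ∀ p, (Δ.rules p).Finite

/-- `σ` is the composition `σ₁ • σ₂` of two structures with the same universe and
agreeing constant interpretations: all relations (including `𝔇`) are disjoint
and interpreted by unions. -/
def IsUnionD {Sg : Signature} {U : Type} (σ σ₁ σ₂ : InterpD Sg U) : Prop :=
  σ₁.const = σ₂.const ∧ σ.const = σ₁.const ∧
  (∀ R, σ₁.rel R ∩ σ₂.rel R = ∅ ∧ σ.rel R = σ₁.rel R ∪ σ₂.rel R) ∧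
  σ₁.D ∩ σ₂.D = ∅ ∧ σ.D = σ₁.D ∪ σ₂.D

/-- The satisfaction relation `(U,σ) ⊨ν_Δ φ` of SLR. -/
inductive SLRSat {Sg : Signature} {U : Type} (Δ : SID Sg) :
    InterpD Sg U → (ℕ → U) → SLRForm Sg Δ.P Δ.ar → Prop where
  | rel {σ : InterpD Sg U} {ν : ℕ → U} {R : Sg.Rel} {args : Fin (Sg.arity R) → ℕ}
      (h1 : σ.rel R = {fun i => ν (args i)})
      (h2 : ∀ R', R' ≠ R → σ.rel R' = ∅)
      (h3 : σ.D = ∅) :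
      SLRSat Δ σ ν (.rel R args)
  | datom {σ : InterpD Sg U} {ν : ℕ → U} {y : ℕ}
      (h1 : σ.D = {ν y}) (h2 : ∀ R, σ.rel R = ∅) :
      SLRSat Δ σ ν (.datom y)
  | star {σ σ₁ σ₂ : InterpD Sg U} {ν : ℕ → U} {φ ψ : SLRForm Sg Δ.P Δ.ar}
      (h : IsUnionD σ σ₁ σ₂) (hφ : SLRSat Δ σ₁ ν φ) (hψ : SLRSat Δ σ₂ ν ψ) :
      SLRSat Δ σ ν (.star φ ψ)
  | ex {σ : InterpD Sg U} {ν : ℕ → U} {y : ℕ} {φ : SLRForm Sg Δ.P Δ.ar} (v : U)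
      (h : SLRSat Δ σ (Function.update ν y v) φ) :
      SLRSat Δ σ ν (.ex y φ)
  | pred {σ : InterpD Sg U} {ν : ℕ → U} {p : Δ.P} {args : Fin (Δ.ar p) → ℕ}
      {ρ : SLRForm Sg Δ.P Δ.ar} (ν' : ℕ → U)
      (hρ : ρ ∈ Δ.rules p) (hν : ∀ i : Fin (Δ.ar p), ν' i.1 = ν (args i))
      (h : SLRSat Δ σ ν' ρ) :
      SLRSat Δ σ ν (.pred p args)

/-- The SID `Δ_tw^k` defining the guarded structures of treewidth at most `k`.
The predicate `A` of arity `k+1` is encoded by `true`, the nullary predicate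
`A_k` by `false`; parameters `x_1,…,x_{k+1}` are the variables `0,…,k`. -/
def twSID (Sg : Signature) (k : ℕ) : SID Sg where
  P := Bool
  ar := fun b => cond b (k+1) 0
  rules := fun b =>
    if b then
      -- (1)  A(x₁,…,x_{k+1}) ← A(x₁,…,x_{k+1}) * A(x₁,…,x_{k+1})
      {SLRForm.star (.pred true fun i => i.1) (.pred true fun i => i.1)} ∪
      -- (2)  A(x₁,…,x_{k+1}) ← ∃y. 𝔇(y) * A(x₁,…,x_{k+1})[xᵢ/y]
      (⋃ i : Fin (k+1),
        {SLRForm.ex (k+1) (.star (.datom (k+1))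
          (.pred true (fun j : Fin (k+1) => if j = i then (k+1 : ℕ) else j.1)))}) ∪
      -- (3)  A(x₁,…,x_{k+1}) ← R(y₁,…,y_{#R}),  y's among x₁,…,x_{k+1}
      {ρ | ∃ (R : Sg.Rel) (f : Fin (Sg.arity R) → Fin (k+1)),
          ρ = SLRForm.rel R (fun a => (f a).1)}
    else
      -- (4)  A_k() ← ∃x₁…∃x_{k+1}. 𝔇(x₁) * … * 𝔇(x_{k+1}) * A(x₁,…,x_{k+1})
      {(List.range (k+1)).foldr (fun i acc => SLRForm.ex i acc)
        ((List.range (k+1)).foldr (fun i acc => SLRForm.star (.datom i) acc)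
          (SLRForm.pred true (fun i => i.1)))}
/-- The signature `Σ ∪ Π` obtained by adding `k` fresh constants (ports). -/
abbrev Signature.addConsts (Sg : Signature) (k : ℕ) : Signature where
  Rel := Sg.Rel
  arity := Sg.arity
  Const := Sg.Const ⊕ Fin k
  finRel := Sg.finRel
  finConst := by haveI := Sg.finConst; exact inferInstance

/-- The signature `(Σ,𝔇)` seen as an ordinary signature: `𝔇` (encoded as `none`)
is a fresh unary relation symbol. -/
abbrev Signature.addD (Sg : Signature) : Signature where
  Rel := Option Sg.Rel
  arity := fun R => R.elim 1 Sg.arity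
  Const := Sg.Const
  finRel := by
    haveI := Sg.finRel
    exact Finite.of_equiv (Sg.Rel ⊕ PUnit.{1}) (Equiv.optionEquivSumPUnit.{0,0} Sg.Rel).symm
  finConst := Sg.finConst

/-- View a structure over `(Σ,𝔇)` as an ordinary structure over `Σ ∪ {𝔇}`. -/
def InterpD.toFull {Sg : Signature} {U : Type} (σ : InterpD Sg U) : Interp Sg.addD U where
  rel := fun R =>
    match R with
    | none => (fun (u : U) (_ : Fin 1) => u) '' σ.D
    | some r => σ.rel r
  rel_finite := fun R => by
    match R with
    | none => exact σ.D_finite.image _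
    | some r => exact σ.rel_finite r
  const := σ.const
/-- Monadic second-order formulas over the signature `Sg`: first-order terms are
variables (naturals) or constants, set variables are naturals. -/
inductive MSO (Sg : Signature) : Type
  | rel (R : Sg.Rel) (args : Fin (Sg.arity R) → ℕ ⊕ Sg.Const)
  | eq (t₁ t₂ : ℕ ⊕ Sg.Const)
  | mem (t : ℕ ⊕ Sg.Const) (X : ℕ)
  | not (φ : MSO Sg)
  | and (φ ψ : MSO Sg)
  | exFO (y : ℕ) (φ : MSO Sg)
  | exSO (Y : ℕ) (φ : MSO Sg)

/-- The quantifier rank of an MSO formula. -/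
def MSO.qr {Sg : Signature} : MSO Sg → ℕ
  | .rel _ _ => 0
  | .eq _ _ => 0
  | .mem _ _ => 0
  | .not φ => φ.qr
  | .and φ ψ => max φ.qr ψ.qr
  | .exFO _ φ => φ.qr + 1
  | .exSO _ φ => φ.qr + 1

/-- Free first-order variables. -/
def MSO.fvFO {Sg : Signature} : MSO Sg → Set ℕ
  | .rel _ args => {n | ∃ i, args i = Sum.inl n}
  | .eq t₁ t₂ => {n | t₁ = Sum.inl n ∨ t₂ = Sum.inl n}
  | .mem t _ => {n | t = Sum.inl n}
  | .not φ => φ.fvFO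
  | .and φ ψ => φ.fvFO ∪ ψ.fvFO
  | .exFO y φ => φ.fvFO \ {y}
  | .exSO _ φ => φ.fvFO

/-- Free set variables. -/
def MSO.fvSO {Sg : Signature} : MSO Sg → Set ℕ
  | .rel _ _ => ∅
  | .eq _ _ => ∅
  | .mem _ X => {X}
  | .not φ => φ.fvSO
  | .and φ ψ => φ.fvSO ∪ ψ.fvSO
  | .exFO _ φ => φ.fvSO
  | .exSO Y φ => φ.fvSO \ {Y}

/-- A sentence is a closed formula. -/
def MSO.IsSentence {Sg : Signature} (φ : MSO Sg) : Prop := φ.fvFO = ∅ ∧ φ.fvSO = ∅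

/-- Value of a term under a first-order assignment. -/
def termVal {Sg : Signature} {U : Type} (σ : Interp Sg U) (ν : ℕ → U) : ℕ ⊕ Sg.Const → U :=
  Sum.elim ν σ.const

/-- MSO satisfaction, under a first-order assignment `ν` and set assignment `μ`. -/
def MSOSat {Sg : Signature} {U : Type} (σ : Interp Sg U) :
    (ℕ → U) → (ℕ → Set U) → MSO Sg → Prop
  | ν, _, .rel R args => (fun i => termVal σ ν (args i)) ∈ σ.rel R
  | ν, _, .eq t₁ t₂ => termVal σ ν t₁ = termVal σ ν t₂
  | ν, μ, .mem t X => termVal σ ν t ∈ μ X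
  | ν, μ, .not φ => ¬ MSOSat σ ν μ φ
  | ν, μ, .and φ ψ => MSOSat σ ν μ φ ∧ MSOSat σ ν μ ψ
  | ν, μ, .exFO y φ => ∃ v : U, MSOSat σ (Function.update ν y v) μ φ
  | ν, μ, .exSO Y φ => ∃ V : Set U, MSOSat σ ν (Function.update μ Y V) φ

/-- A structure satisfies a sentence (notation `S ⊩ φ`). -/
def Interp.Models {Sg : Signature} {U : Type} (σ : Interp Sg U) (φ : MSO Sg) : Prop :=
  ∀ (ν : ℕ → U) (μ : ℕ → Set U), MSOSat σ ν μ φ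

/-- The `r`-type of a structure: the set of sentences of quantifier rank at most
`r` that it satisfies. -/
def Interp.typeAt {Sg : Signature} {U : Type} (σ : Interp Sg U) (r : ℕ) : Set (MSO Sg) :=
  {φ | φ.IsSentence ∧ φ.qr ≤ r ∧ σ.Models φ}

/-- The `r`-type of a structure over `(Σ,𝔇)`: sentences over `Σ ∪ {𝔇}`. -/
def InterpD.typeAt {Sg : Signature} {U : Type} (σ : InterpD Sg U) (r : ℕ) :
    Set (MSO Sg.addD) :=
  σ.toFull.typeAt r

/-- A structure over `(Σ,𝔇)` , bundled with its universe. -/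
structure StrucD (Sg : Signature) where
  carrier : Type
  interp : InterpD Sg carrier

/-- The `r`-type of a bundled structure. -/
def StrucD.typeAt {Sg : Signature} (S : StrucD Sg) (r : ℕ) : Set (MSO Sg.addD) :=
  S.interp.typeAt r

/-- Isomorphism of structures over `(Σ,𝔇)`. -/
structure IsoD {Sg : Signature} (S T : StrucD Sg) where
  equiv : S.carrier ≃ T.carrier
  map_rel : ∀ (R : Sg.Rel) (g : Fin (Sg.arity R) → S.carrier),
      g ∈ S.interp.rel R ↔ (fun i => equiv (g i)) ∈ T.interp.rel R
  map_const : ∀ c, equiv (S.interp.const c) = T.interp.const c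
  map_D : ∀ u, u ∈ S.interp.D ↔ equiv u ∈ T.interp.D

/-- The identifications performed by glueing: `σ₁(c) ∼ σ₂(c)` for every shared
constant `c` (here both structures are over the same signature, so all constants
are shared). -/
def glueRel {Sg : Signature} (S₁ S₂ : StrucD Sg) :
    (S₁.carrier ⊕ S₂.carrier) → (S₁.carrier ⊕ S₂.carrier) → Prop :=
  fun a b => ∃ c : Sg.Const, a = Sum.inl (S₁.interp.const c) ∧ b = Sum.inr (S₂.interp.const c)

/-- Glueing of two structures (with disjoint universes, realized by the sum type):
the quotient of the disjoint union identifying the elements denoted by shared constants. -/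
def glueD {Sg : Signature} (S₁ S₂ : StrucD Sg) : StrucD Sg where
  carrier := Quot (glueRel S₁ S₂)
  interp :=
  { rel := fun R =>
      ((fun g (i : Fin (Sg.arity R)) => Quot.mk (glueRel S₁ S₂) (Sum.inl (g i))) '' S₁.interp.rel R) ∪
      ((fun g (i : Fin (Sg.arity R)) => Quot.mk (glueRel S₁ S₂) (Sum.inr (g i))) '' S₂.interp.rel R)
    rel_finite := fun R =>
      ((S₁.interp.rel_finite R).image _).union ((S₂.interp.rel_finite R).image _)
    const := fun c => Quot.mk (glueRel S₁ S₂) (Sum.inl (S₁.interp.const c))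
    D := ((fun u => Quot.mk (glueRel S₁ S₂) (Sum.inl u)) '' S₁.interp.D) ∪
         ((fun u => Quot.mk (glueRel S₁ S₂) (Sum.inr u)) '' S₂.interp.D)
    D_finite := (S₁.interp.D_finite.image _).union (S₂.interp.D_finite.image _) }

/-- The encoding `enc_k((U,σ),ν)` of the store values into the structure:
port constant `c_{M+i}` (for `i < k`) denotes `ν(i)`, and the store values are
added to `𝔇`. -/
def encD {Sg : Signature} {U : Type} (k : ℕ) (σ : InterpD Sg U) (ν : ℕ → U) :
    InterpD (Sg.addConsts k) U where
  rel := σ.rel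
  rel_finite := σ.rel_finite
  const := Sum.elim σ.const (fun i : Fin k => ν i)
  D := σ.D ∪ ν '' Set.Iio k
  D_finite := σ.D_finite.union ((Set.finite_Iio k).image ν)

/-- Pointwise union of two interpretations over the same universe
(the composition `•`, when the disjointness conditions hold). -/
def InterpD.union {Sg : Signature} {U : Type} (σ₁ σ₂ : InterpD Sg U) : InterpD Sg U where
  rel := fun R => σ₁.rel R ∪ σ₂.rel R
  rel_finite := fun R => (σ₁.rel_finite R).union (σ₂.rel_finite R)
  const := σ₁.const
  D := σ₁.D ∪ σ₂.D
  D_finite := σ₁.D_finite.union σ₂.D_finite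
/-- The operation `glue(fgt_{M+i}(S), S')` where `S'` is a structure over
`({c_{M+i}},𝔇)` with a singleton universe satisfying `𝔇(c_{M+i})`: the port
constant `c_{M+i}` is re-pointed to a fresh element, which is added to `𝔇`. -/
def refreshC {Sg : Signature} {k : ℕ} (i : Fin (k+1)) (S : StrucD (Sg.addConsts (k+1))) :
    StrucD (Sg.addConsts (k+1)) where
  carrier := S.carrier ⊕ Unit
  interp :=
  { rel := fun R => (fun g (a : Fin (Sg.arity R)) => Sum.inl (g a)) '' S.interp.rel R
    rel_finite := fun R => (S.interp.rel_finite R).image _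
    const := fun c =>
      match c with
      | Sum.inl a => Sum.inl (S.interp.const (Sum.inl a))
      | Sum.inr j => if j = i then Sum.inr () else Sum.inl (S.interp.const (Sum.inr j))
    D := (Sum.inl '' S.interp.D) ∪ {Sum.inr ()}
    D_finite := (S.interp.D_finite.image _).union (Set.finite_singleton _) }

/-- An MSO sentence over `(Σ,𝔇)` is also a sentence over `(Σ ∪ Π,𝔇)`. -/
def MSO.addPorts {Sg : Signature} (k : ℕ) : MSO Sg.addD → MSO (Sg.addConsts k).addD
  | .rel R args => .rel R (fun j => (args j).map id Sum.inl)
  | .eq t₁ t₂ => .eq (t₁.map id Sum.inl) (t₂.map id Sum.inl)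
  | .mem t X => .mem (t.map id Sum.inl) X
  | .not φ => .not (φ.addPorts k)
  | .and φ ψ => .and (φ.addPorts k) (ψ.addPorts k)
  | .exFO y φ => .exFO y (φ.addPorts k)
  | .exSO Y φ => .exSO Y (φ.addPorts k)

/-- The SID `Δ_{k,φ}`: the annotation of `Δ_tw^k` with `qr(φ)`-types. The
predicate `A^τ` (arity `k+1`) is encoded by `Sum.inl τ`; the nullary predicate
`A_{k,φ}` by `Sum.inr ()`. The abstract operations `⊛` and `fgt♯` are expressed
via their defining property: `τ₁ ⊛ τ₂` is the type of the glueing of (any) two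
structures of types `τ₁` and `τ₂`, and `fgt♯_{M+i}(τ₁) ⊛ ρ_i` is the type of
`refreshC i S` for (any) `S` of type `τ₁`. -/
def twFormSID (Sg : Signature) (k : ℕ) (φ : MSO Sg.addD) : SID Sg where
  P := Set (MSO ((Sg.addConsts (k+1)).addD)) ⊕ Unit
  ar := fun p => Sum.elim (fun _ => k+1) (fun _ => 0) p
  rules := fun p =>
    match p with
    | Sum.inl τ =>
      -- (5)  A^τ ← A^{τ₁} * A^{τ₂}  where τ = τ₁ ⊛ τ₂
      {ρ | ∃ τ₁ τ₂ : Set (MSO ((Sg.addConsts (k+1)).addD)),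
          ρ = SLRForm.star (.pred (Sum.inl τ₁) fun a => a.1) (.pred (Sum.inl τ₂) fun a => a.1) ∧
          ∃ S₁ S₂ : StrucD (Sg.addConsts (k+1)),
            S₁.typeAt φ.qr = τ₁ ∧ S₂.typeAt φ.qr = τ₂ ∧ (glueD S₁ S₂).typeAt φ.qr = τ} ∪
      -- (6)  A^τ ← ∃y. 𝔇(y) * A^{τ₁}(x₁,…,x_{k+1})[xᵢ/y]
      --      where τ = fgt♯_{M+i}(τ₁) ⊛ ρᵢ
      {ρ | ∃ (i : Fin (k+1)) (τ₁ : Set (MSO ((Sg.addConsts (k+1)).addD))),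
          ρ = SLRForm.ex (k+1) (.star (.datom (k+1))
            (.pred (Sum.inl τ₁) (fun j : Fin (k+1) => if j = i then (k+1 : ℕ) else j.1))) ∧
          ∃ S : StrucD (Sg.addConsts (k+1)),
            S.typeAt φ.qr = τ₁ ∧ (refreshC i S).typeAt φ.qr = τ} ∪
      -- (7)  A^τ ← R(y₁,…,y_{#R})  where τ is the type of a structure S with
      --      S ⊩ R(y₁,…,y_{#R})[x₁/c_{M+1},…] * ⋆ⱼ 𝔇(c_{M+j})
      {ρ | ∃ (R : Sg.Rel) (f : Fin (Sg.arity R) → Fin (k+1)),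
          ρ = SLRForm.rel R (fun a => (f a).1) ∧
          ∃ S : StrucD (Sg.addConsts (k+1)),
            S.interp.rel R = {fun a => S.interp.const (Sum.inr (f a))} ∧
            (∀ R', R' ≠ R → S.interp.rel R' = ∅) ∧
            S.interp.D = Set.range (fun j : Fin (k+1) => S.interp.const (Sum.inr j)) ∧
            Function.Injective (fun j : Fin (k+1) => S.interp.const (Sum.inr j)) ∧
            S.typeAt φ.qr = τ}
    | Sum.inr _ =>
      -- (8)  A_{k,φ}() ← ∃x₁…∃x_{k+1}. 𝔇(x₁) * … * 𝔇(x_{k+1}) * A^τ(x₁,…,x_{k+1})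
      --      for each τ with φ ∈ τ
      {ρ | ∃ τ : Set (MSO ((Sg.addConsts (k+1)).addD)),
          MSO.addPorts (k+1) φ ∈ τ ∧
          ρ = (List.range (k+1)).foldr (fun i acc => SLRForm.ex i acc)
            ((List.range (k+1)).foldr (fun i acc => SLRForm.star (.datom i) acc)
              (SLRForm.pred (Sum.inl τ) (fun a => a.1)))}

/-- Restriction of a structure to a subset of the universe containing all constants. -/
def Interp.restrict {Sg : Signature} {U : Type} (σ : Interp Sg U) (V : Set U)
    (hc : ∀ c, σ.const c ∈ V) : Interp Sg V where
  rel := fun R => {g | (fun i => (g i : U)) ∈ σ.rel R}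
  rel_finite := fun R => by
    show ((fun (g : Fin (Sg.arity R) → V) (i : Fin (Sg.arity R)) => (g i : U)) ⁻¹'
      σ.rel R).Finite
    refine Set.Finite.preimage ?_ (σ.rel_finite R)
    intro a _ b _ hab
    funext i
    exact Subtype.ext (congrFun hab i)
  const := fun c => ⟨σ.const c, hc c⟩

/- ========= Auxiliary development for Lemma k-sid ========= -/

open scoped Classical

lemma Function.iterate_pred_succ_apply' {α : Type*} (f : α → α) {c : ℕ} (hc : c ≠ 0) (x : α) :
    f^[c] x = f (f^[c-1] x) := by
  cases c with
  | zero => exact absurd rfl hc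
  | succ c => rw [Nat.succ_sub_one]; exact Function.iterate_succ_apply' f c x

lemma Function.iterate_pred_succ_apply {α : Type*} (f : α → α) {c : ℕ} (hc : c ≠ 0) (x : α) :
    f^[c] x = f^[c-1] (f x) := by
  cases c with
  | zero => exact absurd rfl hc
  | succ c => rw [Nat.succ_sub_one]; exact Function.iterate_succ_apply f c x

namespace RTree

variable (T : RTree)

lemma iterate_root : ∀ j, T.parent^[j] T.root = T.root := by
  intro j
  induction j with
  | zero => rfl
  | succ j ih => rw [Function.iterate_succ_apply', ih, T.parent_root]

lemma iterate_fix {n : T.N} {a : ℕ} (h : T.parent^[a] n = T.root) {b : ℕ} (hab : a ≤ b) :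
    T.parent^[b] n = T.root := by
  have hb : b = (b - a) + a := by omega
  rw [hb, Function.iterate_add_apply, h, iterate_root]

noncomputable def hit (n : T.N) : ℕ := Nat.find (T.reach n)

lemma hit_spec (n : T.N) : T.parent^[T.hit n] n = T.root := Nat.find_spec (T.reach n)

lemma hit_min {n : T.N} {j : ℕ} (h : j < T.hit n) : T.parent^[j] n ≠ T.root :=
  Nat.find_min (T.reach n) h

lemma desc_refl (n : T.N) : T.Desc n n := ⟨0, rfl⟩

lemma desc_trans {p q r : T.N} (h1 : T.Desc p q) (h2 : T.Desc q r) : T.Desc p r := by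
  obtain ⟨i, hi⟩ := h1; obtain ⟨j, hj⟩ := h2
  exact ⟨j + i, by rw [Function.iterate_add_apply, hi, hj]⟩

lemma desc_root (n : T.N) : T.Desc n T.root := ⟨T.hit n, T.hit_spec n⟩

lemma child_desc {m n : T.N} (h : T.parent m = n) : T.Desc m n :=
  ⟨1, by simpa using h⟩

lemma eq_root_of_cycle {p : T.N} {c : ℕ} (hc : 1 ≤ c) (h : T.parent^[c] p = p) :
    p = T.root := by
  have hl : ∀ l, T.parent^[c * l] p = p := by
    intro l
    induction l with
    | zero => rfl
    | succ l ih => rw [Nat.mul_succ, Function.iterate_add_apply, h, ih]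
  have h1 : T.parent^[c * T.hit p] p = p := hl _
  have h2 : T.parent^[c * T.hit p] p = T.root :=
    T.iterate_fix (T.hit_spec p) (Nat.le_mul_of_pos_left _ hc)
  rw [← h1, h2]

lemma desc_antisymm {p q : T.N} (h1 : T.Desc p q) (h2 : T.Desc q p) : p = q := by
  obtain ⟨a, ha⟩ := h1; obtain ⟨b, hb⟩ := h2
  rcases Nat.eq_zero_or_pos a with h | h
  · subst h; exact ha
  · have hcyc : T.parent^[a + b] q = q := by
      rw [Function.iterate_add_apply, hb, ha]
    have hq : q = T.root := T.eq_root_of_cycle (by omega) hcyc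
    have hp : p = T.root := by
      rw [← hb, hq, iterate_root]
    rw [hp, hq]

lemma exit {q m : T.N} (h1 : T.Desc q m) (h2 : ¬ T.Desc (T.parent q) m) : q = m := by
  obtain ⟨l, hl⟩ := h1
  cases l with
  | zero => exact hl
  | succ l =>
    exact absurd ⟨l, by rw [← Function.iterate_succ_apply]; exact hl⟩ h2

lemma path_exit {p t m : T.N} {a : ℕ} (hpath : T.parent^[a] p = t)
    (h1 : T.Desc p m) (h2 : ¬ T.Desc t m) : ∃ j < a, T.parent^[j] p = m := by
  have hex : ∃ j, ¬ T.Desc (T.parent^[j] p) m := ⟨a, by rw [hpath]; exact h2⟩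
  have hj0 : ¬ T.Desc (T.parent^[Nat.find hex] p) m := Nat.find_spec hex
  have hpos : Nat.find hex ≠ 0 := by
    intro h; rw [h] at hj0; exact hj0 h1
  have hprev : T.Desc (T.parent^[Nat.find hex - 1] p) m := by
    by_contra hc
    exact absurd hc (by simpa using Nat.find_min hex (show Nat.find hex - 1 < Nat.find hex by omega))
  have hstep : T.parent (T.parent^[Nat.find hex - 1] p) = T.parent^[Nat.find hex] p :=
    (Function.iterate_pred_succ_apply' T.parent hpos p).symm
  have heq : T.parent^[Nat.find hex - 1] p = m := by
    refine T.exit hprev ?_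
    rw [hstep]; exact hj0
  have hle : Nat.find hex ≤ a := Nat.find_min' hex (by rw [hpath]; exact h2)
  exact ⟨Nat.find hex - 1, by omega, heq⟩

lemma child_unique_aux {p n : T.N} {a b : ℕ} {m m' : T.N} (hab : a ≤ b)
    (ha : T.parent^[a] p = m) (hb : T.parent^[b] p = m')
    (hm : T.parent m = n) (hm' : T.parent m' = n) (hm'2 : m' ≠ n) : m = m' := by
  have hb' : T.parent^[b - a] m = m' := by
    rw [← ha, ← Function.iterate_add_apply]
    rw [show b - a + a = b by omega]
    exact hb
  rcases Nat.eq_zero_or_pos (b - a) with h | h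
  · rw [h] at hb'; exact hb'
  · exfalso
    apply hm'2
    have h2 : T.parent^[b - a - 1] (T.parent m) = m' := by
      rw [← Function.iterate_pred_succ_apply T.parent (by omega) m]
      exact hb'
    rw [hm] at h2
    exact T.desc_antisymm (T.child_desc hm') ⟨b - a - 1, h2⟩

lemma child_unique {p n m m' : T.N} (hm : T.parent m = n) (hm2 : m ≠ n)
    (hm' : T.parent m' = n) (hm'2 : m' ≠ n)
    (hp : T.Desc p m) (hp' : T.Desc p m') : m = m' := by
  obtain ⟨a, ha⟩ := hp; obtain ⟨b, hb⟩ := hp'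
  rcases le_total a b with h | h
  · exact T.child_unique_aux h ha hb hm hm' hm'2
  · exact (T.child_unique_aux h hb ha hm' hm hm2).symm

lemma desc_child {p n : T.N} (h : T.Desc p n) (hne : p ≠ n) :
    ∃ m, T.parent m = n ∧ m ≠ n ∧ T.Desc p m := by
  have hex : ∃ j, T.parent^[j] p = n := h
  have hspec : T.parent^[Nat.find hex] p = n := Nat.find_spec hex
  have hpos : Nat.find hex ≠ 0 := by
    intro h0; rw [h0] at hspec; exact hne hspec
  refine ⟨T.parent^[Nat.find hex - 1] p, ?_, ?_, ⟨Nat.find hex - 1, rfl⟩⟩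
  · rw [← Function.iterate_pred_succ_apply' T.parent hpos p]
    exact hspec
  · intro hc
    exact Nat.find_min hex (show Nat.find hex - 1 < Nat.find hex by omega) hc

end RTree

section FamTree

variable {ι : Type}

noncomputable def famParent (T : ι → RTree) : Option (Σ i, (T i).N) → Option (Σ i, (T i).N)
  | none => none
  | some ⟨i, n⟩ => if n = (T i).root then none else some ⟨i, (T i).parent n⟩

lemma famParent_iter (T : ι → RTree) {i : ι} {n : (T i).N} {j : ℕ}
    (h : ∀ l < j, (T i).parent^[l] n ≠ (T i).root) :
    (famParent T)^[j] (some ⟨i, n⟩) = some ⟨i, (T i).parent^[j] n⟩ := by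
  induction j with
  | zero => rfl
  | succ j ih =>
    rw [Function.iterate_succ_apply', Function.iterate_succ_apply']
    rw [ih (fun l hl => h l (by omega))]
    show famParent T (some ⟨i, (T i).parent^[j] n⟩) = _
    simp only [famParent]
    rw [if_neg (h j (by omega))]

noncomputable def rtreeFam (T : ι → RTree) [Finite ι] : RTree where
  N := Option (Σ i, (T i).N)
  finN := by
    haveI : ∀ i, Finite (T i).N := fun i => (T i).finN
    exact Finite.of_equiv _ (Equiv.optionEquivSumPUnit.{0,0} _).symm
  root := none
  parent := famParent T
  parent_root := rfl
  reach := by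
    intro x
    match x with
    | none => exact ⟨0, rfl⟩
    | some ⟨i, n⟩ =>
      refine ⟨(T i).hit n + 1, ?_⟩
      rw [Function.iterate_succ_apply']
      show famParent T ((famParent T)^[(T i).hit n] (some ⟨i, n⟩)) = none
      rw [famParent_iter T (fun l hl => (T i).hit_min hl), (T i).hit_spec]
      simp [famParent]

lemma rtreeFam_parent_some (T : ι → RTree) [Finite ι] {i : ι} {n : (T i).N} :
    (rtreeFam T).parent (some ⟨i, n⟩)
      = if n = (T i).root then none else some ⟨i, (T i).parent n⟩ := rfl

lemma rtreeFam_iter (T : ι → RTree) [Finite ι] {i : ι} {n : (T i).N} {j : ℕ}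
    (h : ∀ l < j, (T i).parent^[l] n ≠ (T i).root) :
    (rtreeFam T).parent^[j] (some ⟨i, n⟩) = some ⟨i, (T i).parent^[j] n⟩ :=
  famParent_iter T h

end FamTree
/- ========= Part A: from derivations to tree decompositions ========= -/

section PartA

variable {Sg : Signature} {U : Type}

/-- Good decompositions: tree decompositions with bounded bags, bags inside the
actives-or-domain, and upward persistence of active elements. -/
def GD (k : ℕ) (σ : InterpD Sg U) (act : Fin (k+1) → U) : Prop :=
  ∃ T : TreeDecompD σ,
    (∀ n, (T.bag n : Set U) ⊆ Set.range act ∪ σ.D) ∧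
    (∀ n, (T.bag n).card ≤ k+1) ∧
    (∀ u ∈ Set.range act, ∀ n, u ∈ T.bag n → u ∈ T.bag (T.tree.parent n))

lemma persist_iter {N : Type} {U : Type} (par : N → N) (bag : N → Finset U) {u : U}
    (h : ∀ n, u ∈ bag n → u ∈ bag (par n)) :
    ∀ (j : ℕ) (n), u ∈ bag n → u ∈ bag (par^[j] n) := by
  intro j
  induction j with
  | zero => intro n h0; exact h0
  | succ j ih =>
    intro n h0
    rw [Function.iterate_succ_apply']
    exact h _ (ih n h0)

lemma glueGD {k : ℕ} {ι : Type} [Finite ι] (σ : InterpD Sg U) (fam : ι → InterpD Sg U)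
    (act : Fin (k+1) → U) (actf : ι → Fin (k+1) → U)
    (hGD : ∀ i, GD k (fam i) (actf i))
    (hrelcov : ∀ R g, g ∈ σ.rel R → (∀ a, g a ∈ Set.range act) ∨ ∃ i, g ∈ (fam i).rel R)
    (hDsub : ∀ i, (fam i).D ⊆ σ.D)
    (hDcov : σ.D ⊆ Set.range act ∪ ⋃ i, (fam i).D)
    (hactf : ∀ i, Set.range (actf i) ⊆ Set.range act ∪ σ.D)
    (hback : ∀ i, Set.range act ∩ (fam i).D ⊆ Set.range (actf i))
    (hsep : ∀ i j, i ≠ j →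
      (Set.range (actf i) ∪ (fam i).D) ∩ (Set.range (actf j) ∪ (fam j).D) ⊆ Set.range act) :
    GD k σ act := by
  choose Ti hI1 hI2 hI3 using hGD
  set F : ι → RTree := fun i => (Ti i).tree with hF
  let bagC : Option (Σ i, (F i).N) → Finset U :=
    fun x => Option.rec (Finset.image act Finset.univ) (fun p => (Ti p.1).bag p.2) x
  have hnone : ∀ u : U, u ∈ bagC none ↔ u ∈ Set.range act := by
    intro u; simp [bagC]
  have hsome : ∀ (i : ι) (n : (F i).N) (u : U), u ∈ bagC (some ⟨i, n⟩) ↔ u ∈ (Ti i).bag n := by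
    intro i n u; rfl
  refine ⟨⟨rtreeFam F, bagC, ?_, ?_, ?_⟩, ?_, ?_, ?_⟩
  · -- covers
    intro R g hg
    rcases hrelcov R g hg with h | ⟨i, hi⟩
    · exact ⟨none, fun a => (hnone (g a)).mpr (h a)⟩
    · obtain ⟨n, hn⟩ := (Ti i).covers R g hi
      exact ⟨some ⟨i, n⟩, hn⟩
  · -- coversD
    intro u hu
    rcases hDcov hu with h | h
    · exact ⟨none, (hnone u).mpr h⟩
    · obtain ⟨i, hi⟩ := Set.mem_iUnion.mp h
      obtain ⟨n, hn⟩ := (Ti i).coversD u hi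
      exact ⟨some ⟨i, n⟩, hn⟩
  · -- conn
    intro u hS
    obtain ⟨x₀, hx₀⟩ := hS
    by_cases hu : u ∈ Set.range act
    · refine ⟨none, (hnone u).mpr hu, ?_⟩
      intro x hx
      match x with
      | none =>
        refine ⟨0, rfl, ?_⟩
        intro j hj
        have hj0 : j = 0 := by omega
        subst hj0; exact hx
      | some ⟨i, n⟩ =>
        have hun : u ∈ (Ti i).bag n := hx
        have huacti : u ∈ Set.range (actf i) := by
          rcases hI1 i n hun with h | h
          · exact h
          · exact hback i ⟨hu, h⟩
        have hpers : ∀ j, u ∈ (Ti i).bag ((F i).parent^[j] n) := fun j =>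
          persist_iter _ _ (fun n' => hI3 i u huacti n') j n hun
        refine ⟨(F i).hit n + 1, ?_, ?_⟩
        · show (famParent F)^[(F i).hit n + 1] (some ⟨i, n⟩) = none
          rw [Function.iterate_succ_apply']
          show famParent F ((famParent F)^[(F i).hit n] (some ⟨i, n⟩)) = none
          rw [famParent_iter F (fun l hl => (F i).hit_min hl), (F i).hit_spec]
          simp [famParent]
        · intro j hj
          by_cases hj' : j ≤ (F i).hit n
          · show u ∈ bagC ((famParent F)^[j] (some ⟨i, n⟩))
            rw [famParent_iter F (fun l hl => (F i).hit_min (lt_of_lt_of_le hl hj'))]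
            exact hpers j
          · have hj2 : j = (F i).hit n + 1 := by omega
            subst hj2
            show u ∈ bagC ((famParent F)^[(F i).hit n + 1] (some ⟨i, n⟩))
            rw [Function.iterate_succ_apply']
            rw [famParent_iter F (fun l hl => (F i).hit_min hl), (F i).hit_spec]
            have : famParent F (some ⟨i, (F i).root⟩) = none := by simp [famParent]
            rw [this]
            exact (hnone u).mpr hu
    · -- u not active at the new root
      have hx0some : ∃ i n, x₀ = some ⟨i, n⟩ ∧ u ∈ (Ti i).bag n := by
        match x₀, hx₀ with
        | none, hx₀ => exact absurd ((hnone u).mp hx₀) hu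
        | some ⟨i, n⟩, hx₀ => exact ⟨i, n, rfl, hx₀⟩
      obtain ⟨i₀, n₀, rfl, hn₀⟩ := hx0some
      have honly : ∀ (i : ι) (n : (F i).N), u ∈ (Ti i).bag n → i = i₀ := by
        intro i n hn
        by_contra hii
        apply hu
        refine hsep i i₀ hii ⟨?_, ?_⟩
        · rcases hI1 i n hn with h | h
          exacts [Or.inl h, Or.inr h]
        · rcases hI1 i₀ n₀ hn₀ with h | h
          exacts [Or.inl h, Or.inr h]
      obtain ⟨t', ht', hpath⟩ := (Ti i₀).conn u ⟨n₀, hn₀⟩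
      refine ⟨some ⟨i₀, t'⟩, ht', ?_⟩
      intro x hx
      obtain ⟨n, rfl, hn⟩ : ∃ n, x = some ⟨i₀, n⟩ ∧ u ∈ (Ti i₀).bag n := by
        match x, hx with
        | none, hx => exact absurd ((hnone u).mp hx) hu
        | some ⟨i, n⟩, hx =>
          obtain rfl := honly i n hx
          exact ⟨n, rfl, hx⟩
      obtain ⟨m, hm, hmem⟩ := hpath n hn
      have hex : ∃ j, (F i₀).parent^[j] n = t' := ⟨m, hm⟩
      have hm₀ : (F i₀).parent^[Nat.find hex] n = t' := Nat.find_spec hex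
      have hm₀le : Nat.find hex ≤ m := Nat.find_min' hex hm
      have hnoroot : ∀ l, l < Nat.find hex → (F i₀).parent^[l] n ≠ (F i₀).root := by
        intro l hl hroot
        have h2 : (F i₀).parent^[Nat.find hex] n = (F i₀).root :=
          (F i₀).iterate_fix hroot (le_of_lt hl)
        exact Nat.find_min hex hl (hroot.trans (h2.symm.trans hm₀))
      refine ⟨Nat.find hex, ?_, ?_⟩
      · show (famParent F)^[Nat.find hex] (some ⟨i₀, n⟩) = some ⟨i₀, t'⟩
        rw [famParent_iter F hnoroot, hm₀]
      · intro j hj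
        show u ∈ bagC ((famParent F)^[j] (some ⟨i₀, n⟩))
        rw [famParent_iter F (fun l hl => hnoroot l (lt_of_lt_of_le hl hj))]
        exact hmem j (le_trans hj hm₀le)
  · -- I1
    intro x
    match x with
    | none =>
      intro u hu
      exact Or.inl ((hnone u).mp hu)
    | some ⟨i, n⟩ =>
      intro u hu
      rcases hI1 i n hu with h | h
      · rcases hactf i h with h' | h'
        · exact Or.inl h'
        · exact Or.inr h'
      · exact Or.inr (hDsub i h)
  · -- I2
    intro x
    match x with
    | none =>
      calc (Finset.image act Finset.univ).card ≤ Finset.univ.card := Finset.card_image_le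
      _ = k + 1 := by simp
    | some ⟨i, n⟩ => exact hI2 i n
  · -- I3
    intro u hu x hx
    match x with
    | none => exact hx
    | some ⟨i, n⟩ =>
      have hun : u ∈ (Ti i).bag n := hx
      have huacti : u ∈ Set.range (actf i) := by
        rcases hI1 i n hun with h | h
        · exact h
        · exact hback i ⟨hu, h⟩
      show u ∈ bagC (famParent F (some ⟨i, n⟩))
      by_cases hroot : n = (F i).root
      · simp only [famParent, if_pos hroot]
        exact (hnone u).mpr hu
      · simp only [famParent, if_neg hroot]
        exact hI3 i u huacti n hun

end PartA
section PartA2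

variable {Sg : Signature} {U : Type}

lemma GD_leaf {k : ℕ} (σ : InterpD Sg U) (act : Fin (k+1) → U)
    (hrel : ∀ R g, g ∈ σ.rel R → ∀ a, g a ∈ Set.range act)
    (hD : σ.D ⊆ Set.range act) : GD k σ act := by
  refine glueGD σ (fun i : PEmpty => i.elim) act (fun i => i.elim)
    (fun i => i.elim) ?_ (fun i => i.elim) ?_ (fun i => i.elim) (fun i => i.elim)
    (fun i => i.elim)
  · intro R g hg
    exact Or.inl (hrel R g hg)
  · intro u hu
    exact Or.inl (hD hu)

lemma GD_step {k : ℕ} (σ σ' : InterpD Sg U) (act act' : Fin (k+1) → U)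
    (h : GD k σ' act')
    (hrel : ∀ R, σ.rel R = σ'.rel R)
    (hD1 : σ'.D ⊆ σ.D)
    (hD2 : σ.D ⊆ Set.range act ∪ σ'.D)
    (h4 : Set.range act' ⊆ Set.range act ∪ σ.D)
    (h5 : Set.range act ∩ σ'.D ⊆ Set.range act') : GD k σ act := by
  refine glueGD σ (fun _ : PUnit => σ') act (fun _ => act') (fun _ => h)
    ?_ (fun _ => hD1) ?_ (fun _ => h4) (fun _ => h5) ?_
  · intro R g hg
    exact Or.inr ⟨⟨⟩, (hrel R) ▸ hg⟩
  · intro u hu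
    rcases hD2 hu with h' | h'
    · exact Or.inl h'
    · exact Or.inr (Set.mem_iUnion.mpr ⟨⟨⟩, h'⟩)
  · intro i j hij
    exact absurd (Subsingleton.elim i j) hij

lemma GD_split {k : ℕ} (σ σ₁ σ₂ : InterpD Sg U) (act : Fin (k+1) → U)
    (hu : IsUnionD σ σ₁ σ₂) (h1 : GD k σ₁ act) (h2 : GD k σ₂ act) : GD k σ act := by
  obtain ⟨-, -, hrel, hDdis, hDun⟩ := hu
  refine glueGD σ (fun b : Bool => cond b σ₁ σ₂) act (fun _ => act)
    (fun b => by cases b <;> assumption) ?_ ?_ ?_ (fun _ => Set.subset_union_left)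
    (fun _ => Set.inter_subset_left) ?_
  · intro R g hg
    rw [(hrel R).2] at hg
    rcases hg with h | h
    · exact Or.inr ⟨true, h⟩
    · exact Or.inr ⟨false, h⟩
  · intro b
    cases b
    · rw [hDun]; exact Set.subset_union_right
    · rw [hDun]; exact Set.subset_union_left
  · intro u hud
    rw [hDun] at hud
    rcases hud with h | h
    · exact Or.inr (Set.mem_iUnion.mpr ⟨true, h⟩)
    · exact Or.inr (Set.mem_iUnion.mpr ⟨false, h⟩)
  · intro b b' hbb u hmem
    obtain ⟨hu1, hu2⟩ := hmem
    have key : ∀ c : Bool, u ∈ Set.range act ∪ (cond c σ₁ σ₂).D →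
        u ∈ Set.range act ∨ u ∈ (cond c σ₁ σ₂).D := fun c h => h
    rcases key b hu1 with h | h
    · exact h
    rcases key b' hu2 with h' | h'
    · exact h'
    exfalso
    have : u ∈ σ₁.D ∩ σ₂.D := by
      cases b <;> cases b' <;>
        first | exact absurd rfl hbb | exact ⟨h, h'⟩ | exact ⟨h', h⟩
    rw [hDdis] at this
    exact this

lemma GD_congr {k : ℕ} {σ : InterpD Sg U} {a b : Fin (k+1) → U}
    (h : ∀ i, a i = b i) (hg : GD k σ a) : GD k σ b := by
  rw [← funext h]; exact hg

lemma dis_congr {k : ℕ} {a b : Fin (k+1) → U} (h : ∀ i, a i = b i) {s : Set U}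
    (hd : Set.range b ∩ s = ∅) : Set.range a ∩ s = ∅ := by
  rw [funext h]; exact hd

lemma GD_width {k : ℕ} {σ : InterpD Sg U} {act : Fin (k+1) → U} (h : GD k σ act) :
    ∃ T : TreeDecompD σ, T.width ≤ k := by
  obtain ⟨T, _, hI2, _⟩ := h
  refine ⟨T, ?_⟩
  have h2 : (⨆ n, (T.bag n).card) ≤ k + 1 := ciSup_le' hI2
  unfold TreeDecomp.width
  omega

end PartA2
section PartA3

variable {Sg : Signature} {U : Type}

/-- The induction motive for turning derivations into decompositions. -/
def Motive (k : ℕ) : InterpD Sg U → (ℕ → U) → SLRForm Sg Bool (fun b => cond b (k+1) 0) → Prop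
  | σ, ν, .rel R args =>
      σ.rel R = {fun i => ν (args i)} ∧ (∀ R', R' ≠ R → σ.rel R' = ∅) ∧ σ.D = ∅
  | σ, ν, .datom y => σ.D = {ν y} ∧ ∀ R, σ.rel R = ∅
  | σ, ν, .star φ ψ => ∃ σ₁ σ₂, IsUnionD σ σ₁ σ₂ ∧ Motive k σ₁ ν φ ∧ Motive k σ₂ ν ψ
  | σ, ν, .ex y φ => ∃ v, Motive k σ (Function.update ν y v) φ
  | σ, ν, .pred true args =>
      (Set.range (fun i => ν (args i)) ∩ σ.D = ∅) → GD k σ (fun i => ν (args i))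
  | σ, _, .pred false _ => ∃ T : TreeDecompD σ, T.width ≤ k

lemma motive_exs {k : ℕ} {σ : InterpD Sg U} :
    ∀ (L : List ℕ) (ν : ℕ → U) (ψ : SLRForm Sg Bool (fun b => cond b (k+1) 0)),
      Motive k σ ν (L.foldr (fun i acc => SLRForm.ex i acc) ψ) → ∃ ν₂, Motive k σ ν₂ ψ := by
  intro L
  induction L with
  | nil => intro ν ψ h; exact ⟨ν, h⟩
  | cons i L ih =>
    intro ν ψ h
    obtain ⟨v, hv⟩ := h
    exact ih _ ψ hv

lemma motive_stars {k : ℕ} :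
    ∀ (L : List ℕ) (σ : InterpD Sg U) (ν : ℕ → U) (ψ : SLRForm Sg Bool (fun b => cond b (k+1) 0)),
      Motive k σ ν (L.foldr (fun i acc => SLRForm.star (SLRForm.datom i) acc) ψ) →
      ∃ σ' : InterpD Sg U, (∀ R, σ'.rel R = σ.rel R) ∧ σ'.D ⊆ σ.D ∧
        (∀ m ∈ L, ν m ∈ σ.D ∧ ν m ∉ σ'.D) ∧
        σ.D ⊆ σ'.D ∪ (ν '' {m | m ∈ L}) ∧ Motive k σ' ν ψ := by
  intro L
  induction L with
  | nil =>
    intro σ ν ψ h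
    exact ⟨σ, fun R => rfl, subset_rfl, by simp, by simp, h⟩
  | cons i L ih =>
    intro σ ν ψ h
    obtain ⟨σ₁, σ₂, hun, hd, hrest⟩ := h
    obtain ⟨hd1, hd2⟩ := hd
    obtain ⟨σ', hrel, hsub, hmem, hcov, hM⟩ := ih σ₂ ν ψ hrest
    obtain ⟨-, -, hrelu, hDdis, hDun⟩ := hun
    refine ⟨σ', ?_, ?_, ?_, ?_, hM⟩
    · intro R
      rw [hrel R, (hrelu R).2, hd2 R]
      simp
    · rw [hDun]; exact hsub.trans Set.subset_union_right
    · intro m hm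
      rcases List.mem_cons.mp hm with rfl | hm
      · constructor
        · rw [hDun, hd1]; exact Or.inl rfl
        · intro hc
          have h2 : ν m ∈ σ₁.D ∩ σ₂.D := ⟨by rw [hd1]; rfl, hsub hc⟩
          rw [hDdis] at h2; exact h2
      · obtain ⟨h1, h2⟩ := hmem m hm
        exact ⟨by rw [hDun]; exact Or.inr h1, h2⟩
    · rw [hDun]
      intro u hu
      rcases hu with hu | hu
      · rw [hd1] at hu
        exact Or.inr ⟨i, List.mem_cons_self, (Set.mem_singleton_iff.mp hu).symm⟩
      · rcases hcov hu with h | h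
        · exact Or.inl h
        · obtain ⟨m, hm, hmu⟩ := h
          exact Or.inr ⟨m, List.mem_cons_of_mem _ hm, hmu⟩

lemma slr_to_motive {k : ℕ} {σ : InterpD Sg U} {ν : ℕ → U}
    {φ : SLRForm Sg (twSID Sg k).P (twSID Sg k).ar}
    (h : SLRSat (twSID Sg k) σ ν φ) : Motive k σ ν φ := by
  induction h with
  | rel h1 h2 h3 => exact ⟨h1, h2, h3⟩
  | datom h1 h2 => exact ⟨h1, h2⟩
  | star h _ _ ih1 ih2 => exact ⟨_, _, h, ih1, ih2⟩
  | ex v _ ih => exact ⟨v, ih⟩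
  | @pred σ ν p args ρ ν' hρ hν _ ih =>
    cases p with
    | true =>
      intro hdis
      set A : Fin (k+1) → U := fun i => ν (args i) with hA
      have hνA : ∀ i : Fin (k+1), ν' i.1 = A i := fun i => hν i
      have hdisA : Set.range A ∩ σ.D = ∅ := hdis
      simp only [twSID, if_true, Set.mem_union, Set.mem_singleton_iff, Set.mem_iUnion,
        Set.mem_setOf_eq] at hρ
      rcases hρ with (hρ | ⟨_, ⟨i, rfl⟩, (hρ : ρ = _)⟩) | ⟨R, f, hρ⟩
      · -- rule (1): split
        subst hρ
        simp only [Motive] at ih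
        obtain ⟨σ₁, σ₂, hun, hm1, hm2⟩ := ih
        have hsub1 : σ₁.D ⊆ σ.D := by rw [hun.2.2.2.2]; exact Set.subset_union_left
        have hsub2 : σ₂.D ⊆ σ.D := by rw [hun.2.2.2.2]; exact Set.subset_union_right
        have hd1 : Set.range A ∩ σ₁.D = ∅ := by
          apply Set.eq_empty_iff_forall_notMem.mpr
          intro u hu
          exact Set.eq_empty_iff_forall_notMem.mp hdis u ⟨hu.1, hsub1 hu.2⟩
        have hd2 : Set.range A ∩ σ₂.D = ∅ := by
          apply Set.eq_empty_iff_forall_notMem.mpr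
          intro u hu
          exact Set.eq_empty_iff_forall_notMem.mp hdis u ⟨hu.1, hsub2 hu.2⟩
        exact GD_split σ σ₁ σ₂ A hun (GD_congr hνA (hm1 (dis_congr hνA hd1)))
          (GD_congr hνA (hm2 (dis_congr hνA hd2)))
      · -- rule (2): extend
        subst hρ
        simp only [Motive, Function.update_self] at ih
        obtain ⟨v, σ₁, σ₂, hun, ⟨hD1, hrel1⟩, hm2⟩ := ih
        have hpt : ∀ j : Fin (k+1),
            Function.update ν' (k+1) v (if j = i then (k+1 : ℕ) else j.1)
            = Function.update A i v j := by
          intro j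
          by_cases hj : j = i
          · subst hj
            rw [if_pos rfl, Function.update_self, Function.update_self]
          · rw [if_neg hj, Function.update_of_ne (Nat.ne_of_lt j.2),
              Function.update_of_ne hj]
            exact hνA j
        have hsubD : σ₂.D ⊆ σ.D := by rw [hun.2.2.2.2]; exact Set.subset_union_right
        have hvD : v ∈ σ.D := by
          rw [hun.2.2.2.2, hD1]; exact Or.inl rfl
        have hvn2 : v ∉ σ₂.D := by
          intro hc
          have h2 : v ∈ σ₁.D ∩ σ₂.D := ⟨by rw [hD1]; rfl, hc⟩
          rw [hun.2.2.2.1] at h2; exact h2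
        have hd2 : Set.range (Function.update A i v) ∩ σ₂.D = ∅ := by
          apply Set.eq_empty_iff_forall_notMem.mpr
          rintro u ⟨⟨j, rfl⟩, hud⟩
          by_cases hj : j = i
          · subst hj
            rw [Function.update_self] at hud
            exact hvn2 hud
          · rw [Function.update_of_ne hj] at hud
            exact Set.eq_empty_iff_forall_notMem.mp hdisA (A j)
              ⟨Set.mem_range_self j, hsubD hud⟩
        have hg2 : GD k σ₂ (Function.update A i v) :=
          GD_congr hpt (hm2 (dis_congr hpt hd2))
        have hg1 : GD k σ (Function.update A i v) := by
          refine GD_step σ σ₂ _ _ hg2 ?_ hsubD ?_ Set.subset_union_left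
            Set.inter_subset_left
          · intro R
            rw [(hun.2.2.1 R).2, hrel1 R]
            simp
          · rw [hun.2.2.2.2, hD1]
            intro u hu
            rcases hu with hu | hu
            · exact Or.inl ⟨i, by simpa using (Set.mem_singleton_iff.mp hu).symm⟩
            · exact Or.inr hu
        refine GD_step σ σ A (Function.update A i v) hg1 (fun R => rfl) subset_rfl
          (fun u hu => Or.inr hu) ?_ ?_
        · rintro u ⟨j, rfl⟩
          by_cases hj : j = i
          · subst hj; rw [Function.update_self]; exact Or.inr hvD
          · rw [Function.update_of_ne hj]; exact Or.inl (Set.mem_range_self j)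
        · intro u hu
          rw [hdisA] at hu
          exact absurd hu (Set.notMem_empty u)
      · -- rule (3): leaf
        subst hρ
        simp only [Motive] at ih
        obtain ⟨h1, h2, h3⟩ := ih
        refine GD_leaf σ A ?_ (by rw [h3]; exact Set.empty_subset _)
        intro R' g hg a
        by_cases hR : R' = R
        · subst hR
          rw [h1] at hg
          rw [Set.mem_singleton_iff.mp hg]
          exact ⟨f a, (hνA (f a)).symm⟩
        · rw [h2 R' hR] at hg
          exact absurd hg (Set.notMem_empty g)
    | false =>
      show ∃ T : TreeDecompD σ, T.width ≤ k
      simp only [twSID, Set.mem_singleton_iff, if_false] at hρ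
      subst hρ
      obtain ⟨ν₂, h2⟩ := motive_exs _ _ _ ih
      obtain ⟨σ', hrel, hsub, hmem, hcov, hM⟩ := motive_stars _ _ _ _ h2
      simp only [Motive] at hM
      set A2 : Fin (k+1) → U := fun i => ν₂ i.1 with hA2
      have hd : Set.range A2 ∩ σ'.D = ∅ := by
        apply Set.eq_empty_iff_forall_notMem.mpr
        rintro u ⟨⟨j, rfl⟩, hud⟩
        exact (hmem j.1 (List.mem_range.mpr j.2)).2 hud
      have hg : GD k σ' A2 :=
        GD_congr (fun _ => rfl) (hM (dis_congr (fun _ => rfl) hd))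
      refine GD_width (GD_step σ σ' A2 A2 hg (fun R => (hrel R).symm) hsub ?_
        Set.subset_union_left Set.inter_subset_left)
      intro u hu
      rcases hcov hu with h | h
      · exact Or.inr h
      · obtain ⟨m, hm, rfl⟩ := h
        exact Or.inl ⟨⟨m, List.mem_range.mp hm⟩, rfl⟩

lemma partA {k : ℕ} {σ : InterpD Sg U} {ν : ℕ → U}
    (h : SLRSat (twSID Sg k) σ ν (.pred false (fun a => a.1))) :
    ∃ T : TreeDecompD σ, T.width ≤ k := slr_to_motive h

end PartA3

/- ========= Part B: from tree decompositions to derivations ========= -/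

section PartB1

variable {Sg : Signature} {U : Type}

lemma Interp.ext' {σ₁ σ₂ : Interp Sg U} (h1 : σ₁.rel = σ₂.rel)
    (h2 : σ₁.const = σ₂.const) : σ₁ = σ₂ := by
  cases σ₁; cases σ₂
  cases h1; cases h2
  rfl

lemma InterpD.ext' {σ₁ σ₂ : InterpD Sg U} (h1 : σ₁.rel = σ₂.rel)
    (h2 : σ₁.const = σ₂.const) (h3 : σ₁.D = σ₂.D) : σ₁ = σ₂ := by
  cases σ₁; cases σ₂
  cases Interp.ext' h1 h2
  cases h3
  rfl

/-- The store encoding a tuple of actives. -/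
noncomputable def extStore (k : ℕ) (act : Fin (k+1) → U) : ℕ → U :=
  fun m => if h : m < k+1 then act ⟨m, h⟩ else act ⟨0, Nat.succ_pos k⟩

/-- Satisfaction of the predicate atom `A(act)`. -/
def ASat (k : ℕ) (σ : InterpD Sg U) (act : Fin (k+1) → U) : Prop :=
  SLRSat (twSID Sg k) σ (extStore k act) (SLRForm.pred true (fun a => a.1))

lemma ASat_congr {k : ℕ} {σ σ' : InterpD Sg U} {act : Fin (k+1) → U}
    (h1 : ∀ R, σ.rel R = σ'.rel R) (h2 : σ.const = σ'.const) (h3 : σ.D = σ'.D)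
    (h : ASat k σ' act) : ASat k σ act := by
  have he : σ = σ' := InterpD.ext' (funext h1) h2 h3
  rwa [he]

lemma extStore_fin {k : ℕ} (act : Fin (k+1) → U) (j : Fin (k+1)) :
    extStore k act (j.1) = act j := by
  simp only [extStore, dif_pos j.2, Fin.eta]

/-- Rule (3): relation atoms. -/
lemma ASat_rel {k : ℕ} (σ : InterpD Sg U) (act : Fin (k+1) → U) (R : Sg.Rel)
    (f : Fin (Sg.arity R) → Fin (k+1))
    (h1 : σ.rel R = {fun a => act (f a)}) (h2 : ∀ R', R' ≠ R → σ.rel R' = ∅)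
    (h3 : σ.D = ∅) : ASat k σ act := by
  refine SLRSat.pred (ρ := SLRForm.rel R (fun a => (f a).1)) (extStore k act) ?_
    (fun i => rfl) ?_
  · simp only [twSID, if_true]
    exact Set.mem_union_right _ ⟨R, f, rfl⟩
  · refine SLRSat.rel ?_ h2 h3
    rw [h1]
    congr 1
    funext a
    exact (extStore_fin act (f a)).symm

/-- Rule (1): splitting. -/
lemma ASat_split {k : ℕ} {σ σ₁ σ₂ : InterpD Sg U} {act : Fin (k+1) → U}
    (hu : IsUnionD σ σ₁ σ₂) (h1 : ASat k σ₁ act) (h2 : ASat k σ₂ act) :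
    ASat k σ act := by
  refine SLRSat.pred
    (ρ := SLRForm.star (.pred true fun i => i.1) (.pred true fun i => i.1))
    (extStore k act) ?_ (fun i => rfl) ?_
  · simp only [twSID, if_true]
    exact Set.mem_union_left _ (Set.mem_union_left _ rfl)
  · exact SLRSat.star hu h1 h2

lemma SLRSat_pred_store {Δ : SID Sg} {σ : InterpD Sg U} {p : Δ.P}
    {args args' : Fin (Δ.ar p) → ℕ} {ν ν' : ℕ → U}
    (h : SLRSat Δ σ ν (.pred p args)) (hv : ∀ i, ν' (args' i) = ν (args i)) :
    SLRSat Δ σ ν' (.pred p args') := by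
  cases h with
  | pred ν₃ hρ hν₃ hsub =>
    exact SLRSat.pred ν₃ hρ (fun i => (hν₃ i).trans (hv i).symm) hsub

/-- Rule (2): introducing one element of the domain. -/
lemma ASat_intro {k : ℕ} {σ σD σ' : InterpD Sg U} {act : Fin (k+1) → U}
    (i : Fin (k+1)) (v : U)
    (hu : IsUnionD σ σD σ') (hD : σD.D = {v}) (hrel : ∀ R, σD.rel R = ∅)
    (h : ASat k σ' (Function.update act i v)) : ASat k σ act := by
  refine SLRSat.pred
    (ρ := SLRForm.ex (k+1) (.star (.datom (k+1))
      (.pred true (fun j : Fin (k+1) => if j = i then (k+1 : ℕ) else j.1))))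
    (extStore k act) ?_ (fun i => rfl) ?_
  · simp only [twSID, if_true]
    exact Set.mem_union_left _ (Set.mem_union_right _ (Set.mem_iUnion.mpr ⟨i, rfl⟩))
  · refine SLRSat.ex v (SLRSat.star hu ?_ ?_)
    · refine SLRSat.datom ?_ hrel
      rw [Function.update_self]
      exact hD
    · refine SLRSat_pred_store h ?_
      intro (j : Fin (k+1))
      by_cases hj : j = i
      · subst hj
        rw [if_pos rfl, Function.update_self, extStore_fin, Function.update_self]
      · have hjlt : (j : ℕ) < k + 1 := j.2
        rw [if_neg hj, Function.update_of_ne (Nat.ne_of_lt hjlt), extStore_fin,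
          extStore_fin, Function.update_of_ne hj]

lemma exs_sat {Δ : SID Sg} {σ : InterpD Sg U} {body : SLRForm Sg Δ.P Δ.ar} :
    ∀ (l : List ℕ) (ν ν' : ℕ → U), (∀ m, m ∉ l → ν' m = ν m) →
      SLRSat Δ σ ν' body →
      SLRSat Δ σ ν (l.foldr (fun i acc => SLRForm.ex i acc) body) := by
  intro l
  induction l with
  | nil =>
    intro ν ν' h hb
    have he : ν' = ν := funext fun m => h m (List.not_mem_nil)
    rwa [he] at hb
  | cons i l ih =>
    intro ν ν' h hb
    refine SLRSat.ex (ν' i) ?_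
    refine ih (Function.update ν i (ν' i)) ν' ?_ hb
    intro m hm
    by_cases hmi : m = i
    · subst hmi; rw [Function.update_self]
    · rw [Function.update_of_ne hmi]
      refine h m ?_
      simp only [List.mem_cons, not_or]
      exact ⟨hmi, hm⟩

lemma stars_sat {Δ : SID Sg} {body : SLRForm Sg Δ.P Δ.ar} :
    ∀ (l : List ℕ) (σ σ' : InterpD Sg U) (ν : ℕ → U),
      (∀ R, σ'.rel R = σ.rel R) → (σ'.const = σ.const) →
      (σ.D = σ'.D ∪ ν '' {m | m ∈ l}) →
      (∀ m ∈ l, ν m ∉ σ'.D) → ((l.map ν).Nodup) →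
      SLRSat Δ σ' ν body →
      SLRSat Δ σ ν (l.foldr (fun i acc => SLRForm.star (.datom i) acc) body) := by
  intro l
  induction l with
  | nil =>
    intro σ σ' ν h1 h2 h3 _ _ hb
    have he : σ' = σ := by
      refine InterpD.ext' (funext h1) h2 ?_
      rw [h3]; simp
    rwa [he] at hb
  | cons i l ih =>
    intro σ σ' ν h1 h2 h3 h4 h5 hb
    have hvD : ν i ∈ σ.D := by
      rw [h3]; exact Or.inr ⟨i, List.mem_cons_self, rfl⟩
    set σ₁ : InterpD Sg U :=
      ⟨⟨fun _ => ∅, fun _ => Set.finite_empty, σ.const⟩, {ν i}, Set.finite_singleton _⟩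
      with hσ₁
    set σ₂ : InterpD Sg U :=
      ⟨⟨σ.rel, σ.rel_finite, σ.const⟩, σ.D \ {ν i}, σ.D_finite.diff⟩ with hσ₂
    have hnodup := List.nodup_cons.mp h5
    refine SLRSat.star (σ₁ := σ₁) (σ₂ := σ₂) ?_ (SLRSat.datom rfl (fun _ => rfl)) ?_
    · refine ⟨rfl, rfl, fun R => ⟨by simp [hσ₁], by simp [hσ₁, hσ₂]⟩, ?_, ?_⟩
      · simp [hσ₁, hσ₂]
      · show σ.D = {ν i} ∪ (σ.D \ {ν i})
        rw [Set.union_diff_cancel (by simpa using hvD)]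
    · refine ih σ₂ σ' ν h1 h2 ?_ (fun m hm => h4 m (List.mem_cons_of_mem _ hm))
        hnodup.2 hb
      show σ.D \ {ν i} = σ'.D ∪ ν '' {m | m ∈ l}
      rw [h3]
      ext u
      simp only [Set.mem_diff, Set.mem_union, Set.mem_image, Set.mem_setOf_eq,
        Set.mem_singleton_iff, List.mem_cons]
      constructor
      · rintro ⟨hu1 | ⟨m, hm | hm, hmu⟩, hu2⟩
        · exact Or.inl hu1
        · exact absurd (hm ▸ hmu).symm hu2
        · exact Or.inr ⟨m, hm, hmu⟩
      · rintro (hu | ⟨m, hm, hmu⟩)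
        · refine ⟨Or.inl hu, ?_⟩
          intro hc
          exact h4 i (List.mem_cons_self) (hc ▸ hu)
        · refine ⟨Or.inr ⟨m, Or.inr hm, hmu⟩, ?_⟩
          intro hc
          apply hnodup.1
          rw [← hc, ← hmu]
          exact List.mem_map_of_mem hm

/-- Chains of rule (2) applications. -/
lemma ASat_chain {k : ℕ} :
    ∀ (l : List (Fin (k+1) × U)) (σ σ' : InterpD Sg U) (act : Fin (k+1) → U),
      (∀ R, σ.rel R = σ'.rel R) → (σ.const = σ'.const) →
      (σ.D = σ'.D ∪ {u | u ∈ l.map Prod.snd}) →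
      (∀ p ∈ l, (p : Fin (k+1) × U).2 ∉ σ'.D) → ((l.map Prod.snd).Nodup) →
      ASat k σ' (l.foldl (fun a p => Function.update a p.1 p.2) act) →
      ASat k σ act := by
  intro l
  induction l with
  | nil =>
    intro σ σ' act h1 h2 h3 _ _ hb
    refine ASat_congr h1 h2 ?_ hb
    rw [h3]; simp
  | cons p l ih =>
    intro σ σ' act h1 h2 h3 h4 h5 hb
    obtain ⟨i, v⟩ := p
    have hvD : v ∈ σ.D := by
      rw [h3]; exact Or.inr (by simp)
    have hnodup := List.nodup_cons.mp h5
    set σD : InterpD Sg U :=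
      ⟨⟨fun _ => ∅, fun _ => Set.finite_empty, σ.const⟩, {v}, Set.finite_singleton _⟩
      with hσD
    set σmid : InterpD Sg U :=
      ⟨⟨σ.rel, σ.rel_finite, σ.const⟩, σ.D \ {v}, σ.D_finite.diff⟩ with hσmid
    refine ASat_intro i v (σD := σD) (σ' := σmid) ?_ rfl (fun _ => rfl) ?_
    · refine ⟨rfl, rfl, fun R => ⟨by simp [hσD], by simp [hσD, hσmid]⟩, ?_, ?_⟩
      · simp [hσD, hσmid]
      · show σ.D = {v} ∪ (σ.D \ {v})
        rw [Set.union_diff_cancel (by simpa using hvD)]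
    · refine ih σmid σ' (Function.update act i v) h1 h2 ?_
        (fun q hq => h4 q (List.mem_cons_of_mem _ hq)) hnodup.2 hb
      show σ.D \ {v} = σ'.D ∪ {u | u ∈ l.map Prod.snd}
      rw [h3]
      ext u
      simp only [Set.mem_diff, Set.mem_union, Set.mem_setOf_eq, List.map_cons,
        List.mem_cons, Set.mem_singleton_iff]
      constructor
      · rintro ⟨hu1 | (hm | hm), hu2⟩
        · exact Or.inl hu1
        · exact absurd hm hu2
        · exact Or.inr hm
      · rintro (hu | hm)
        · refine ⟨Or.inl hu, fun hc => h4 (i, v) (List.mem_cons_self) (hc ▸ hu)⟩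
        · refine ⟨Or.inr (Or.inr hm), fun hc => hnodup.1 (hc ▸ hm)⟩

/-- Rule (4): the top-level derivation. -/
lemma ASat_top {k : ℕ} {σ σ' : InterpD Sg U} {act : Fin (k+1) → U} (ν : ℕ → U)
    (hinj : Function.Injective act)
    (hrel : ∀ R, σ.rel R = σ'.rel R) (hconst : σ'.const = σ.const)
    (hD : σ.D = σ'.D ∪ Set.range act) (hdisj : ∀ j, act j ∉ σ'.D)
    (h : ASat k σ' act) :
    SLRSat (twSID Sg k) σ ν (.pred false (fun a => a.1)) := by
  refine SLRSat.pred
    (ρ := (List.range (k+1)).foldr (fun i acc => SLRForm.ex i acc)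
      ((List.range (k+1)).foldr (fun i acc => SLRForm.star (.datom i) acc)
        (SLRForm.pred true (fun i => i.1))))
    (extStore k act) ?_ (fun i => i.elim0) ?_
  · simp only [twSID]
    rfl
  · refine exs_sat _ (extStore k act) (extStore k act) (fun m _ => rfl) ?_
    refine stars_sat _ σ σ' (extStore k act) (fun R => (hrel R).symm) hconst ?_ ?_ ?_ h
    · have him : extStore k act '' {m : ℕ | m ∈ List.range (k+1)} = Set.range act := by
        apply Set.eq_of_subset_of_subset
        · rintro u ⟨m, hm, rfl⟩
          have hmlt : m < k+1 := List.mem_range.mp hm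
          exact ⟨⟨m, hmlt⟩, (extStore_fin act ⟨m, hmlt⟩).symm⟩
        · rintro u ⟨j, rfl⟩
          exact ⟨j.1, List.mem_range.mpr j.2, extStore_fin act j⟩
      rw [hD, him]
    · intro m hm
      rw [List.mem_range] at hm
      have : extStore k act m = act ⟨m, hm⟩ := extStore_fin act ⟨m, hm⟩
      rw [this]
      exact hdisj _
    · refine List.Nodup.map_on ?_ (List.nodup_range)
      intro x hx y hy hxy
      rw [List.mem_range] at hx hy
      rw [extStore_fin act ⟨x, hx⟩, extStore_fin act ⟨y, hy⟩] at hxy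
      have := hinj hxy
      exact congrArg Fin.val this

end PartB1

section PartB2

variable {Sg : Signature} {U : Type}

/-- Adjacency in a rooted tree. -/
def RTree.Adj (T : RTree) (n m : T.N) : Prop :=
  (T.parent m = n ∧ m ≠ n) ∨ (T.parent n = m ∧ n ≠ m)

lemma fix_eq_root (T : RTree) {q : T.N} (h : T.parent q = q) : q = T.root :=
  T.eq_root_of_cycle le_rfl (by simpa using h)

/-- Smoothing: all bags can be made of size exactly `k+1`. -/
lemma smooth (σ : InterpD Sg U) (k : ℕ) (hcard : k + 1 ≤ σ.D.ncard)
    (Tr : RTree) (b : Tr.N → Finset U)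
    (hcov : ∀ (R : Sg.Rel) (g : Fin (Sg.arity R) → U), g ∈ σ.rel R → ∃ n, ∀ i, g i ∈ b n)
    (hcovD : ∀ u ∈ σ.D, ∃ n, u ∈ b n)
    (hconn : ∀ u, Tr.ConnSubtree {n | u ∈ b n})
    (hsub : ∀ n, (b n : Set U) ⊆ σ.D)
    (hle : ∀ n, (b n).card ≤ k+1) :
    ∃ b' : Tr.N → Finset U,
      (∀ (R : Sg.Rel) (g : Fin (Sg.arity R) → U), g ∈ σ.rel R → ∃ n, ∀ i, g i ∈ b' n) ∧
      (∀ u ∈ σ.D, ∃ n, u ∈ b' n) ∧ (∀ u, Tr.ConnSubtree {n | u ∈ b' n}) ∧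
      (∀ n, (b' n : Set U) ⊆ σ.D) ∧ (∀ n, (b' n).card = k+1) := by
  haveI : Finite Tr.N := Tr.finN
  haveI : Fintype Tr.N := Fintype.ofFinite _
  -- strong induction on the total deficiency
  suffices main : ∀ (M : ℕ) (b : Tr.N → Finset U),
      (∀ (R : Sg.Rel) (g : Fin (Sg.arity R) → U), g ∈ σ.rel R → ∃ n, ∀ i, g i ∈ b n) →
      (∀ u ∈ σ.D, ∃ n, u ∈ b n) →
      (∀ u, Tr.ConnSubtree {n | u ∈ b n}) →
      (∀ n, (b n : Set U) ⊆ σ.D) →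
      (∀ n, (b n).card ≤ k+1) →
      (∑ n, (k + 1 - (b n).card)) ≤ M →
      ∃ b' : Tr.N → Finset U,
        (∀ (R : Sg.Rel) (g : Fin (Sg.arity R) → U), g ∈ σ.rel R → ∃ n, ∀ i, g i ∈ b' n) ∧
        (∀ u ∈ σ.D, ∃ n, u ∈ b' n) ∧ (∀ u, Tr.ConnSubtree {n | u ∈ b' n}) ∧
        (∀ n, (b' n : Set U) ⊆ σ.D) ∧ (∀ n, (b' n).card = k+1) by
    exact main _ b hcov hcovD hconn hsub hle le_rfl
  intro M
  induction M with
  | zero =>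
    intro b hcov hcovD hconn hsub hle hM
    refine ⟨b, hcov, hcovD, hconn, hsub, ?_⟩
    intro n
    have h0 : ∑ n, (k + 1 - (b n).card) = 0 := Nat.le_zero.mp hM
    have := (Finset.sum_eq_zero_iff.mp h0) n (Finset.mem_univ n)
    have := hle n
    omega
  | succ M ih =>
    intro b hcov hcovD hconn hsub hle hM
    by_cases hfull : ∀ n, (b n).card = k+1
    · exact ⟨b, hcov, hcovD, hconn, hsub, hfull⟩
    · push_neg at hfull
      obtain ⟨n₀, hn₀⟩ := hfull
      have hn₀lt : (b n₀).card < k + 1 := lt_of_le_of_ne (hle n₀) hn₀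
      by_cases hpair : ∃ n m u, Tr.Adj n m ∧ (b n).card < k+1 ∧ u ∈ b m ∧ u ∉ b n
      · obtain ⟨n, m, u, hadj, hlt, hum, hun⟩ := hpair
        set b2 : Tr.N → Finset U := Function.update b n (insert u (b n)) with hb2
        have hb2n : b2 n = insert u (b n) := Function.update_self _ _ _
        have hb2o : ∀ p, p ≠ n → b2 p = b p := fun p hp => Function.update_of_ne hp _ _
        have hmono : ∀ p, b p ⊆ b2 p := by
          intro p
          by_cases hp : p = n
          · subst hp; rw [hb2n]; exact Finset.subset_insert _ _
          · rw [hb2o p hp]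
        have hmem2 : ∀ (w : U) (p : Tr.N), w ∈ b2 p ↔ (w ∈ b p ∨ (w = u ∧ p = n)) := by
          intro w p
          by_cases hp : p = n
          · subst hp
            rw [hb2n, Finset.mem_insert]
            constructor
            · rintro (rfl | h)
              · exact Or.inr ⟨rfl, rfl⟩
              · exact Or.inl h
            · rintro (h | ⟨rfl, -⟩)
              · exact Or.inr h
              · exact Or.inl rfl
          · rw [hb2o p hp]
            constructor
            · exact Or.inl
            · rintro (h | ⟨-, rfl⟩)
              · exact h
              · exact absurd rfl hp
        refine ih b2 (fun R g hg => (hcov R g hg).imp (fun p hp i => hmono p (hp i)))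
          (fun w hw => (hcovD w hw).imp (fun p hp => hmono p hp)) ?_ ?_ ?_ ?_
        · -- connectivity
          intro w
          by_cases hwu : w = u
          · subst hwu
            -- the new node set is insert n S
            have hset : {p | w ∈ b2 p} = insert n {p | w ∈ b p} := by
              ext p
              simp only [Set.mem_setOf_eq, Set.mem_insert_iff, hmem2]
              tauto
            rw [hset]
            intro _hne
            obtain ⟨t, ht, hpath⟩ := hconn w ⟨m, hum⟩
            rcases hadj with ⟨hpm, hmn⟩ | ⟨hpn, hnm⟩
            · -- parent m = n : m is a child of n
              obtain ⟨mm, hmm, hmemm⟩ := hpath m hum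
              rcases Nat.eq_zero_or_pos mm with h0 | h0
              · -- t = m, new top is n
                rw [h0] at hmm
                simp only [Function.iterate_zero, id_eq] at hmm
                refine ⟨n, Set.mem_insert _ _, ?_⟩
                intro p hpmem
                rcases Set.mem_insert_iff.mp hpmem with rfl | hp
                · refine ⟨0, rfl, fun j hj => ?_⟩
                  have hj0 : j = 0 := by omega
                  subst hj0; exact Set.mem_insert _ _
                · obtain ⟨mp, hmp, hmemp⟩ := hpath p hp
                  refine ⟨mp + 1, ?_, ?_⟩
                  · rw [Function.iterate_succ_apply', hmp, ← hmm, hpm]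
                  · intro j hj
                    by_cases hj' : j ≤ mp
                    · exact Set.mem_insert_of_mem _ (hmemp j hj')
                    · have hj1 : j = mp + 1 := by omega
                      subst hj1
                      rw [Function.iterate_succ_apply', hmp, ← hmm, hpm]
                      exact Set.mem_insert _ _
              · -- mm ≥ 1 : n would be in S, contradiction
                exfalso
                have h1 : Tr.parent^[1] m ∈ {p | w ∈ b p} := hmemm 1 h0
                simp only [Function.iterate_one, hpm, Set.mem_setOf_eq] at h1
                exact hun h1
            · -- parent n = m : m is the parent of n
              refine ⟨t, Set.mem_insert_of_mem _ ht, ?_⟩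
              intro p hpmem
              rcases Set.mem_insert_iff.mp hpmem with rfl | hp
              · obtain ⟨mm, hmm, hmemm⟩ := hpath m hum
                refine ⟨mm + 1, ?_, ?_⟩
                · rw [Function.iterate_succ_apply, hpn]
                  exact hmm
                · intro j hj
                  rcases Nat.eq_zero_or_pos j with rfl | hjpos
                  · exact Set.mem_insert _ _
                  · refine Set.mem_insert_of_mem _ ?_
                    have hrw : Tr.parent^[j] p = Tr.parent^[j-1] m := by
                      rw [Function.iterate_pred_succ_apply Tr.parent (by omega), hpn]
                    rw [hrw]
                    exact hmemm (j-1) (by omega)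
              · obtain ⟨mp, hmp, hmemp⟩ := hpath p hp
                exact ⟨mp, hmp, fun j hj => Set.mem_insert_of_mem _ (hmemp j hj)⟩
          · -- w ≠ u : unchanged
            have hset : {p | w ∈ b2 p} = {p | w ∈ b p} := by
              ext p
              simp only [Set.mem_setOf_eq, hmem2]
              constructor
              · rintro (h | ⟨rfl, -⟩)
                · exact h
                · exact absurd rfl hwu
              · exact Or.inl
            rw [hset]
            exact hconn w
        · -- bags inside D
          intro p
          by_cases hp : p = n
          · subst hp
            rw [hb2n]
            intro w hw
            rcases Finset.mem_insert.mp hw with rfl | hw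
            · exact hsub _ hum
            · exact hsub _ hw
          · rw [hb2o p hp]; exact hsub p
        · -- card bound
          intro p
          by_cases hp : p = n
          · subst hp
            rw [hb2n, Finset.card_insert_of_notMem hun]
            omega
          · rw [hb2o p hp]; exact hle p
        · -- measure decreases
          have hlt2 : ∑ p, (k + 1 - (b2 p).card) < ∑ p, (k + 1 - (b p).card) := by
            refine Finset.sum_lt_sum (fun p _ => ?_) ⟨n, Finset.mem_univ n, ?_⟩
            · have := Finset.card_le_card (hmono p)
              omega
            · rw [hb2n, Finset.card_insert_of_notMem hun]
              omega
          omega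
      · -- no growth pair : contradiction with |D| ≥ k+1
        exfalso
        push_neg at hpair
        have bsub : ∀ n m, Tr.Adj n m → (b n).card < k+1 → b m ⊆ b n := by
          intro n m hadj hlt u hum
          exact hpair n m u hadj hlt hum
        -- climb to the root
        have hup : ∀ j, b (Tr.parent^[j] n₀) ⊆ b n₀ ∧ (b (Tr.parent^[j] n₀)).card < k+1 := by
          intro j
          induction j with
          | zero => exact ⟨subset_rfl, hn₀lt⟩
          | succ j ihj =>
            obtain ⟨hsub', hlt'⟩ := ihj
            set q := Tr.parent^[j] n₀
            rw [Function.iterate_succ_apply']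
            by_cases hq : Tr.parent q = q
            · rw [hq]; exact ⟨hsub', hlt'⟩
            · have hstep : b (Tr.parent q) ⊆ b q := by
                refine bsub q (Tr.parent q) (Or.inr ⟨rfl, fun h => hq h.symm⟩) hlt'
              constructor
              · exact hstep.trans hsub'
              · exact lt_of_le_of_lt (Finset.card_le_card hstep) hlt'
        have hroot := hup (Tr.hit n₀)
        rw [Tr.hit_spec] at hroot
        -- descend to every node
        have hdown : ∀ (j : ℕ) (p : Tr.N), Tr.parent^[j] p = Tr.root →
            b p ⊆ b Tr.root ∧ (b p).card < k+1 := by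
          intro j
          induction j with
          | zero =>
            intro p hp
            simp only [Function.iterate_zero, id_eq] at hp
            subst hp
            exact ⟨subset_rfl, lt_of_le_of_lt (Finset.card_le_card hroot.1) hn₀lt⟩
          | succ j ihj =>
            intro p hp
            by_cases hq : Tr.parent p = p
            · have hfix : ∀ l, Tr.parent^[l] p = p := by
                intro l
                induction l with
                | zero => rfl
                | succ l ihl => rw [Function.iterate_succ_apply', ihl, hq]
              refine ihj p ?_
              have hp' : p = Tr.root := by rw [hfix (j+1)] at hp; exact hp
              rw [hfix j, hp']
            · have hq' := ihj (Tr.parent p) (by rw [← Function.iterate_succ_apply]; exact hp)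
              have hstep : b p ⊆ b (Tr.parent p) :=
                bsub (Tr.parent p) p (Or.inl ⟨rfl, fun h => hq h.symm⟩) hq'.2
              exact ⟨hstep.trans hq'.1, lt_of_le_of_lt (Finset.card_le_card hstep) hq'.2⟩
        have hall : ∀ p, b p ⊆ b Tr.root := by
          intro p
          obtain ⟨j, hj⟩ := Tr.reach p
          exact (hdown j p hj).1
        have hDsub : σ.D ⊆ (b Tr.root : Set U) := by
          intro u hu
          obtain ⟨p, hp⟩ := hcovD u hu
          exact hall p hp
        have hcard2 : σ.D.ncard ≤ (b Tr.root).card := by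
          have := Set.ncard_le_ncard hDsub (b Tr.root).finite_toSet
          rwa [Set.ncard_coe_finset] at this
        have hrootlt : (b Tr.root).card < k + 1 :=
          lt_of_le_of_lt (Finset.card_le_card hroot.1) hn₀lt
        omega

end PartB2

section PartB3

variable {Sg : Signature} {U : Type}

/-- A structure consisting of a single tuple. -/
noncomputable def singleT (c0 : Sg.Const → U) (t : Σ R : Sg.Rel, (Fin (Sg.arity R) → U)) :
    InterpD Sg U where
  rel := fun R' => {g' | (⟨R', g'⟩ : Σ R : Sg.Rel, (Fin (Sg.arity R) → U)) = t}
  rel_finite := fun R' => Set.Subsingleton.finite (by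
    rintro a ha b hb
    have h := ha.trans hb.symm
    exact eq_of_heq (Sigma.mk.inj_iff.mp h).2)
  const := c0
  D := ∅
  D_finite := Set.finite_empty

/-- Union of a finite family of structures. -/
noncomputable def unionOf {ι : Type} (c0 : Sg.Const → U) (s : Finset ι)
    (F : ι → InterpD Sg U) : InterpD Sg U where
  rel := fun R => ⋃ i ∈ s, (F i).rel R
  rel_finite := fun R => Set.Finite.biUnion s.finite_toSet (fun i _ => (F i).rel_finite R)
  const := c0
  D := ⋃ i ∈ s, (F i).D
  D_finite := Set.Finite.biUnion s.finite_toSet (fun i _ => (F i).D_finite)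

/-- Satisfaction-or-empty. -/
def ASat' (k : ℕ) (σ : InterpD Sg U) (act : Fin (k+1) → U) : Prop :=
  ASat k σ act ∨ ((∀ R, σ.rel R = ∅) ∧ σ.D = ∅)

lemma ASat'_union {k : ℕ} {σT σP σQ : InterpD Sg U} {act : Fin (k+1) → U}
    (hu : IsUnionD σT σP σQ) (hP : ASat' k σP act) (hQ : ASat' k σQ act) :
    ASat' k σT act := by
  obtain ⟨h1, h2, h3, h4, h5⟩ := hu
  rcases hP with hP | ⟨hPrel, hPD⟩
  · rcases hQ with hQ | ⟨hQrel, hQD⟩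
    · exact Or.inl (ASat_split ⟨h1, h2, h3, h4, h5⟩ hP hQ)
    · refine Or.inl (ASat_congr (σ' := σP) ?_ h2 ?_ hP)
      · intro R
        rw [(h3 R).2, hQrel R]
        simp
      · rw [h5, hQD]
        simp
  · rcases hQ with hQ | ⟨hQrel, hQD⟩
    · refine Or.inl (ASat_congr (σ' := σQ) ?_ (h2.trans h1) ?_ hQ)
      · intro R
        rw [(h3 R).2, hPrel R]
        simp
      · rw [h5, hPD]
        simp
    · refine Or.inr ⟨?_, ?_⟩
      · intro R
        rw [(h3 R).2, hPrel R, hQrel R]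
        simp
      · rw [h5, hPD, hQD]
        simp

lemma foldParts {k : ℕ} {ι : Type} (c0 : Sg.Const → U) (s : Finset ι)
    (F : ι → InterpD Sg U) (act : Fin (k+1) → U)
    (hconsts : ∀ i ∈ s, (F i).const = c0)
    (hdisjR : ∀ i ∈ s, ∀ j ∈ s, i ≠ j → ∀ R, (F i).rel R ∩ (F j).rel R = ∅)
    (hdisjD : ∀ i ∈ s, ∀ j ∈ s, i ≠ j → (F i).D ∩ (F j).D = ∅)
    (hsat : ∀ i ∈ s, ASat' k (F i) act) :
    ASat' k (unionOf c0 s F) act := by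
  induction s using Finset.induction_on with
  | empty =>
    refine Or.inr ⟨?_, ?_⟩ <;> simp [unionOf]
  | @insert a s ha ih =>
    refine ASat'_union (σP := F a) (σQ := unionOf c0 s F) ?_
      (hsat a (Finset.mem_insert_self a s)) ?_
    · refine ⟨?_, ?_, ?_, ?_, ?_⟩
      · exact (hconsts a (Finset.mem_insert_self a s)).trans rfl
      · show (unionOf c0 (insert a s) F).const = (F a).const
        exact (hconsts a (Finset.mem_insert_self a s)).symm
      · intro R
        constructor
        · apply Set.eq_empty_iff_forall_notMem.mpr
          rintro g ⟨hg1, hg2⟩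
          show False
          obtain ⟨i, hi⟩ := Set.mem_iUnion.mp hg2
          simp only [Set.mem_iUnion, exists_prop] at hi
          obtain ⟨his, hgi⟩ := hi
          have hne : a ≠ i := fun h => ha (h ▸ his)
          exact Set.eq_empty_iff_forall_notMem.mp
            (hdisjR a (Finset.mem_insert_self a s) i (Finset.mem_insert_of_mem his) hne R)
            g ⟨hg1, hgi⟩
        · show (⋃ i ∈ insert a s, (F i).rel R) = _
          rw [Finset.set_biUnion_insert]
          rfl
      · apply Set.eq_empty_iff_forall_notMem.mpr
        rintro u ⟨hu1, hu2⟩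
        obtain ⟨i, hi⟩ := Set.mem_iUnion.mp hu2
        simp only [Set.mem_iUnion, exists_prop] at hi
        obtain ⟨his, hui⟩ := hi
        have hne : a ≠ i := fun h => ha (h ▸ his)
        exact Set.eq_empty_iff_forall_notMem.mp
          (hdisjD a (Finset.mem_insert_self a s) i (Finset.mem_insert_of_mem his) hne)
          u ⟨hu1, hui⟩
      · show (⋃ i ∈ insert a s, (F i).D) = _
        rw [Finset.set_biUnion_insert]
        rfl
    · refine ih (fun i hi => hconsts i (Finset.mem_insert_of_mem hi))
        (fun i hi j hj hij => hdisjR i (Finset.mem_insert_of_mem hi) j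
          (Finset.mem_insert_of_mem hj) hij)
        (fun i hi j hj hij => hdisjD i (Finset.mem_insert_of_mem hi) j
          (Finset.mem_insert_of_mem hj) hij)
        (fun i hi => hsat i (Finset.mem_insert_of_mem hi))

lemma applyUpdates_eq {k : ℕ} :
    ∀ (lp : List (Fin (k+1))) (f act : Fin (k+1) → U),
      (lp.map (fun j => (j, f j))).foldl (fun a p => Function.update a p.1 p.2) act
        = fun j => if j ∈ lp then f j else act j := by
  intro lp
  induction lp with
  | nil => intro f act; funext j; simp
  | cons i lp ih =>
    intro f act
    show (lp.map (fun j => (j, f j))).foldl _ (Function.update act i (f i)) = _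
    rw [ih]
    funext j
    by_cases hj : j ∈ lp
    · simp [hj, List.mem_cons]
    · by_cases hji : j = i
      · subst hji
        simp [hj]
      · simp [hj, hji, Function.update_of_ne hji]

end PartB3

section PartB4

variable {Sg : Signature} {U : Type}

variable (σ : InterpD Sg U) (Tr : RTree) (b : Tr.N → Finset U)
  (W : (R : Sg.Rel) → (Fin (Sg.arity R) → U) → Tr.N)

/-- A node is kept if some tuple is witnessed in its subtree. -/
def KeepN (n : Tr.N) : Prop :=
  ∃ (R : Sg.Rel) (g : Fin (Sg.arity R) → U), g ∈ σ.rel R ∧ Tr.Desc (W R g) n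

/-- The substructure carried by the (kept part of the) subtree at `n`. -/
noncomputable def sigAt (n : Tr.N) : InterpD Sg U where
  rel := fun R => {g | g ∈ σ.rel R ∧ Tr.Desc (W R g) n}
  rel_finite := fun R => (σ.rel_finite R).subset (fun _ hg => hg.1)
  const := σ.const
  D := (⋃ p ∈ {p | Tr.Desc p n ∧ KeepN σ Tr W p}, (b p : Set U)) \ (b n : Set U)
  D_finite := by
    haveI : Finite Tr.N := Tr.finN
    exact Set.Finite.diff
      (Set.Finite.biUnion (Set.toFinite _) (fun p _ => (b p).finite_toSet))

/-- The substructure at a child `m` of `n`, together with the swapped-in bag. -/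
noncomputable def sigHat (n m : Tr.N) : InterpD Sg U where
  rel := fun R => {g | g ∈ σ.rel R ∧ Tr.Desc (W R g) m}
  rel_finite := fun R => (σ.rel_finite R).subset (fun _ hg => hg.1)
  const := σ.const
  D := (sigAt σ Tr b W m).D ∪ ((b m : Set U) \ (b n : Set U))
  D_finite := ((sigAt σ Tr b W m).D_finite).union (((b m).finite_toSet).diff)

/-- Claim: an element present below a child `m` but not in `b m` is not in `b n`. -/
lemma claim_up (hconn : ∀ u, Tr.ConnSubtree {p | u ∈ b p})
    {n m p : Tr.N} {u : U} (hpm : Tr.parent m = n) (hmn : m ≠ n)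
    (hdp : Tr.Desc p m) (hup : u ∈ b p) (hum : u ∉ b m) : u ∉ b n := by
  intro hbn
  obtain ⟨t, ht, hpath⟩ := hconn u ⟨p, hup⟩
  by_cases htm : Tr.Desc t m
  · obtain ⟨a, ha, _⟩ := hpath n hbn
    have h1 : Tr.Desc n t := ⟨a, ha⟩
    have h2 : Tr.Desc t n := Tr.desc_trans htm (Tr.child_desc hpm)
    have h3 : t = n := Tr.desc_antisymm h2 h1
    rw [h3] at htm
    exact hmn (Tr.desc_antisymm (Tr.child_desc hpm) htm)
  · obtain ⟨a, ha, hmem⟩ := hpath p hup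
    obtain ⟨j, hj, hjm⟩ := Tr.path_exit ha hdp htm
    have hmemj := hmem j (le_of_lt hj)
    rw [hjm] at hmemj
    exact hum hmemj

/-- Claim: an element absent from `b n` cannot appear below two distinct children. -/
lemma claim_sep (hconn : ∀ u, Tr.ConnSubtree {p | u ∈ b p})
    {n m m' p p' : Tr.N} {u : U}
    (hpm : Tr.parent m = n) (hmn : m ≠ n) (hpm' : Tr.parent m' = n) (hm'n : m' ≠ n)
    (hmm' : m ≠ m') (hdp : Tr.Desc p m) (hdp' : Tr.Desc p' m')
    (hup : u ∈ b p) (hup' : u ∈ b p') (hun : u ∉ b n) : False := by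
  obtain ⟨t, ht, hpath⟩ := hconn u ⟨p, hup⟩
  by_cases htm : Tr.Desc t m
  · by_cases htm' : Tr.Desc t m'
    · exact hmm' (Tr.child_unique hpm hmn hpm' hm'n htm htm')
    · obtain ⟨a, ha, hmem⟩ := hpath p' hup'
      obtain ⟨j, hj, hjm⟩ := Tr.path_exit ha hdp' htm'
      have hn : Tr.parent^[j+1] p' = n := by
        rw [Function.iterate_succ_apply', hjm, hpm']
      have hmemj := hmem (j+1) hj
      rw [hn] at hmemj
      exact hun hmemj
  · obtain ⟨a, ha, hmem⟩ := hpath p hup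
    obtain ⟨j, hj, hjm⟩ := Tr.path_exit ha hdp htm
    have hn : Tr.parent^[j+1] p = n := by
      rw [Function.iterate_succ_apply', hjm, hpm]
    have hmemj := hmem (j+1) hj
    rw [hn] at hmemj
    exact hun hmemj

lemma sigHat_D (hconn : ∀ u, Tr.ConnSubtree {p | u ∈ b p})
    {n m : Tr.N} (hpm : Tr.parent m = n) (hmn : m ≠ n) (hkm : KeepN σ Tr W m) :
    (sigHat σ Tr b W n m).D
      = (⋃ p ∈ {p | Tr.Desc p m ∧ KeepN σ Tr W p}, (b p : Set U)) \ (b n : Set U) := by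
  show ((⋃ p ∈ {p | Tr.Desc p m ∧ KeepN σ Tr W p}, (b p : Set U)) \ (b m : Set U))
      ∪ ((b m : Set U) \ (b n : Set U)) = _
  ext u
  simp only [Set.mem_union, Set.mem_diff, Set.mem_iUnion, exists_prop, Set.mem_setOf_eq,
    Finset.mem_coe]
  constructor
  · rintro (⟨⟨q, ⟨hq1, hq2⟩, hq3⟩, hu2⟩ | ⟨hu1, hu2⟩)
    · exact ⟨⟨q, ⟨hq1, hq2⟩, hq3⟩, claim_up Tr b hconn hpm hmn hq1 hq3 hu2⟩
    · exact ⟨⟨m, ⟨Tr.desc_refl m, hkm⟩, hu1⟩, hu2⟩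
  · rintro ⟨⟨q, hq, hq3⟩, hu2⟩
    by_cases hm : u ∈ b m
    · exact Or.inr ⟨hm, hu2⟩
    · exact Or.inl ⟨⟨q, hq, hq3⟩, hm⟩

lemma mainB (k : ℕ)
    (hW : ∀ (R : Sg.Rel) (g : Fin (Sg.arity R) → U), g ∈ σ.rel R → ∀ i, g i ∈ b (W R g))
    (hconn : ∀ u, Tr.ConnSubtree {p | u ∈ b p})
    (hcardb : ∀ p : Tr.N, (b p).card = k+1) :
    ∀ (N : ℕ) (n : Tr.N), ({p | Tr.Desc p n}.ncard ≤ N) → KeepN σ Tr W n →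
      ∀ act : Fin (k+1) → U, Function.Injective act → (∀ j, act j ∈ b n) →
      ASat k (sigAt σ Tr b W n) act := by
  haveI : Finite Tr.N := Tr.finN
  haveI := Sg.finRel
  intro N
  induction N with
  | zero =>
    intro n hN _ _ _ _
    exfalso
    have h1 : 0 < {p | Tr.Desc p n}.ncard :=
      (Set.ncard_pos (Set.toFinite _)).mpr ⟨n, Tr.desc_refl n⟩
    omega
  | succ N ih =>
    intro n hN hkeep act hinj hact
    have himg : Finset.image act Finset.univ = b n := by
      refine Finset.eq_of_subset_of_card_le ?_ ?_
      · intro u hu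
        obtain ⟨j, _, rfl⟩ := Finset.mem_image.mp hu
        exact hact j
      · rw [Finset.card_image_of_injective _ hinj, Finset.card_univ, Fintype.card_fin]
        exact (hcardb n).le
    have hsurj : ∀ u ∈ b n, ∃ j, act j = u := by
      intro u hu
      rw [← himg] at hu
      obtain ⟨j, _, hj⟩ := Finset.mem_image.mp hu
      exact ⟨j, hj⟩
    -- tuple and child index sets
    have htfin : {t : Σ R : Sg.Rel, (Fin (Sg.arity R) → U) |
        t.2 ∈ σ.rel t.1 ∧ W t.1 t.2 = n}.Finite := by
      refine Set.Finite.subset (s := ⋃ R : Sg.Rel, Sigma.mk R '' (σ.rel R)) ?_ ?_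
      · exact Set.finite_iUnion (fun R => (σ.rel_finite R).image _)
      · rintro ⟨R, g⟩ ⟨hg, -⟩
        exact Set.mem_iUnion.mpr ⟨R, ⟨g, hg, rfl⟩⟩
    set tn : Finset (Σ R : Sg.Rel, (Fin (Sg.arity R) → U)) := htfin.toFinset with htn
    set cn : Finset Tr.N :=
      (Set.toFinite {m | Tr.parent m = n ∧ m ≠ n ∧ KeepN σ Tr W m}).toFinset with hcn
    have hmem_tn : ∀ t, t ∈ tn ↔ (t.2 ∈ σ.rel t.1 ∧ W t.1 t.2 = n) := by
      intro t; rw [htn, Set.Finite.mem_toFinset]; rfl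
    have hmem_cn : ∀ m, m ∈ cn ↔ (Tr.parent m = n ∧ m ≠ n ∧ KeepN σ Tr W m) := by
      intro m; rw [hcn, Set.Finite.mem_toFinset]; rfl
    set F : (Σ R : Sg.Rel, (Fin (Sg.arity R) → U)) ⊕ Tr.N → InterpD Sg U :=
      Sum.elim (fun t => singleT σ.const t) (fun m => sigHat σ Tr b W n m) with hF
    set s := tn.disjSum cn with hs
    -- satisfaction of the parts
    have hsat : ∀ i ∈ s, ASat' k (F i) act := by
      rintro (t | m) hi
      · -- a tuple witnessed at n
        left
        have ht := (hmem_tn t).mp (Finset.inl_mem_disjSum.mp hi)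
        have hco : ∀ a, ∃ j, act j = t.2 a := by
          intro a
          refine hsurj _ ?_
          rw [← ht.2]
          exact hW t.1 t.2 ht.1 a
        choose f hf using hco
        obtain ⟨R0, g0⟩ := t
        have hg0 : g0 = fun a => act (f a) := funext fun a => (hf a).symm
        refine ASat_rel _ act R0 f ?_ ?_ rfl
        · show {g' | (⟨R0, g'⟩ : Σ R : Sg.Rel, (Fin (Sg.arity R) → U)) = ⟨R0, g0⟩} = _
          ext g'
          simp only [Set.mem_setOf_eq, Set.mem_singleton_iff, Sigma.mk.inj_iff,
            heq_eq_eq, true_and]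
          rw [hg0]
        · intro R' hR'
          apply Set.eq_empty_iff_forall_notMem.mpr
          intro g' hg'
          exact hR' (congrArg Sigma.fst hg')
      · -- a kept child
        left
        have hm := (hmem_cn m).mp (Finset.inr_mem_disjSum.mp hi)
        set J : Finset (Fin (k+1)) := Finset.univ.filter (fun j => act j ∉ b m) with hJ
        have himgJ : J.image act = b n \ b m := by
          ext u
          simp only [Finset.mem_image, Finset.mem_sdiff, hJ, Finset.mem_filter,
            Finset.mem_univ, true_and]
          constructor
          · rintro ⟨j, hj, rfl⟩
            exact ⟨hact j, hj⟩
          · rintro ⟨hu1, hu2⟩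
            obtain ⟨j, rfl⟩ := hsurj u hu1
            exact ⟨j, hu2, rfl⟩
        have hcardJ : J.card = (b m \ b n).card := by
          have h1 : J.card = (b n \ b m).card := by
            rw [← himgJ, Finset.card_image_of_injective _ hinj]
          have h2 := Finset.card_sdiff_add_card_inter (b n) (b m)
          have h3 := Finset.card_sdiff_add_card_inter (b m) (b n)
          rw [Finset.inter_comm] at h3
          have hc1 := hcardb n
          have hc2 := hcardb m
          omega
        set e := Finset.equivOfCardEq hcardJ with he
        set actm : Fin (k+1) → U :=
          (fun j => if h : j ∈ J then (e ⟨j, h⟩ : U) else act j) with hactm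
        have hactm_J : ∀ j (h : j ∈ J), actm j = (e ⟨j, h⟩ : U) := by
          intro j h; rw [hactm]; exact dif_pos h
        have hactm_nJ : ∀ j, j ∉ J → actm j = act j := by
          intro j h; rw [hactm]; exact dif_neg h
        have hactm_diff : ∀ j (h : j ∈ J), actm j ∈ b m \ b n := by
          intro j h; rw [hactm_J j h]; exact (e ⟨j, h⟩).2
        have hactm_in : ∀ j, actm j ∈ b m := by
          intro j
          by_cases h : j ∈ J
          · exact (Finset.mem_sdiff.mp (hactm_diff j h)).1
          · rw [hactm_nJ j h]
            by_contra hc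
            exact h (Finset.mem_filter.mpr ⟨Finset.mem_univ j, hc⟩)
        have hactm_inj : Function.Injective actm := by
          intro x y hxy
          by_cases hx : x ∈ J <;> by_cases hy : y ∈ J
          · rw [hactm_J x hx, hactm_J y hy] at hxy
            have hexy := e.injective (Subtype.ext hxy)
            exact congrArg Subtype.val hexy
          · exfalso
            have h1 := (Finset.mem_sdiff.mp (hactm_diff x hx)).2
            rw [hxy, hactm_nJ y hy] at h1
            exact h1 (hact y)
          · exfalso
            have h1 := (Finset.mem_sdiff.mp (hactm_diff y hy)).2
            rw [← hxy, hactm_nJ x hx] at h1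
            exact h1 (hact x)
          · rw [hactm_nJ x hx, hactm_nJ y hy] at hxy
            exact hinj hxy
        have hcount : {p | Tr.Desc p m}.ncard ≤ N := by
          have hdsub : {p | Tr.Desc p m} ⊆ {p | Tr.Desc p n} :=
            fun p hp => Tr.desc_trans hp (Tr.child_desc hm.1)
          have hdne : n ∉ {p | Tr.Desc p m} := by
            intro hc
            exact hm.2.1 (Tr.desc_antisymm (Tr.child_desc hm.1) hc)
          have hss : {p | Tr.Desc p m} ⊂ {p | Tr.Desc p n} :=
            ⟨hdsub, fun hc => hdne (hc (Tr.desc_refl n))⟩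
          have := Set.ncard_lt_ncard hss (Set.toFinite _)
          omega
        have hIH := ih m hcount hm.2.2 actm hactm_inj hactm_in
        set lp := J.toList with hlp
        set l : List (Fin (k+1) × U) := lp.map (fun j => (j, actm j)) with hl
        have hvals : {u | u ∈ l.map Prod.snd} = ((b m : Set U) \ (b n : Set U)) := by
          ext u
          simp only [Set.mem_setOf_eq, hl, List.map_map, List.mem_map, Function.comp_def]
          constructor
          · rintro ⟨j, hj, rfl⟩
            have := hactm_diff j (by rw [hlp] at hj; exact Finset.mem_toList.mp hj)
            simpa using this
          · intro hu
            have hu' : u ∈ b m \ b n := by simpa using hu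
            refine ⟨(e.symm ⟨u, hu'⟩).1, ?_, ?_⟩
            · rw [hlp]; exact Finset.mem_toList.mpr (e.symm ⟨u, hu'⟩).2
            · rw [hactm_J _ (e.symm ⟨u, hu'⟩).2]
              simp
        refine ASat_chain l _ (sigAt σ Tr b W m) act (fun R => rfl) rfl ?_ ?_ ?_ ?_
        · show (sigHat σ Tr b W n m).D = (sigAt σ Tr b W m).D ∪ {u | u ∈ l.map Prod.snd}
          rw [hvals]
          rfl
        · rintro ⟨j, v⟩ hq
          simp only [hl, List.mem_map] at hq
          obtain ⟨j', hj', hj'2⟩ := hq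
          have hv : v = actm j' := (congrArg Prod.snd hj'2).symm
          intro hc
          exact hc.2 (hv ▸ hactm_in j')
        · show (l.map Prod.snd).Nodup
          rw [hl, List.map_map]
          exact List.Nodup.map (fun x y h => hactm_inj h) (Finset.nodup_toList J)
        · have hfold : (l.foldl (fun a p => Function.update a p.1 p.2) act) = actm := by
            rw [hl, applyUpdates_eq]
            funext j
            by_cases hj : j ∈ lp
            · rw [if_pos hj]
            · rw [if_neg hj, hactm_nJ]
              rw [hlp] at hj
              intro hc
              exact hj (Finset.mem_toList.mpr hc)
          rw [hfold]
          exact hIH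
    -- constants
    have hconsts : ∀ i ∈ s, (F i).const = σ.const := by
      rintro (t | m) _ <;> rfl
    -- pairwise disjointness of relations
    have hdisjR : ∀ i ∈ s, ∀ j ∈ s, i ≠ j → ∀ R, (F i).rel R ∩ (F j).rel R = ∅ := by
      rintro (t | m) hi (t' | m') hj hij R <;>
        apply Set.eq_empty_iff_forall_notMem.mpr <;> rintro g ⟨hg1, hg2⟩
      · -- two tuples
        have : t = t' := hg1.symm.trans hg2
        exact hij (by rw [this])
      · -- tuple / child
        have ht := (hmem_tn t).mp (Finset.inl_mem_disjSum.mp hi)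
        have hm' := (hmem_cn m').mp (Finset.inr_mem_disjSum.mp hj)
        obtain ⟨R0, g0⟩ := t
        have hg1' : (⟨R, g⟩ : Σ R : Sg.Rel, (Fin (Sg.arity R) → U)) = ⟨R0, g0⟩ := hg1
        have hR : R = R0 := congrArg Sigma.fst hg1'
        subst hR
        have hgg : g = g0 := eq_of_heq (Sigma.mk.inj_iff.mp hg1').2
        subst hgg
        have hWn : W R g = n := ht.2
        have hg2'' : g ∈ σ.rel R ∧ Tr.Desc (W R g) m' := hg2
        have hdn : Tr.Desc n m' := by rw [← hWn]; exact hg2''.2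
        exact hm'.2.1 (Tr.desc_antisymm (Tr.child_desc hm'.1) hdn)
      · -- child / tuple
        have ht := (hmem_tn t').mp (Finset.inl_mem_disjSum.mp hj)
        have hm := (hmem_cn m).mp (Finset.inr_mem_disjSum.mp hi)
        obtain ⟨R0, g0⟩ := t'
        have hg2' : (⟨R, g⟩ : Σ R : Sg.Rel, (Fin (Sg.arity R) → U)) = ⟨R0, g0⟩ := hg2
        have hR : R = R0 := congrArg Sigma.fst hg2'
        subst hR
        have hgg : g = g0 := eq_of_heq (Sigma.mk.inj_iff.mp hg2').2
        subst hgg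
        have hWn : W R g = n := ht.2
        have hg1'' : g ∈ σ.rel R ∧ Tr.Desc (W R g) m := hg1
        have hdn : Tr.Desc n m := by rw [← hWn]; exact hg1''.2
        exact hm.2.1 (Tr.desc_antisymm (Tr.child_desc hm.1) hdn)
      · -- two children
        have hm := (hmem_cn m).mp (Finset.inr_mem_disjSum.mp hi)
        have hm' := (hmem_cn m').mp (Finset.inr_mem_disjSum.mp hj)
        have hmm : m ≠ m' := fun h => hij (by rw [h])
        exact hmm (Tr.child_unique hm.1 hm.2.1 hm'.1 hm'.2.1 hg1.2 hg2.2)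
    -- pairwise disjointness of domains
    have hdisjD : ∀ i ∈ s, ∀ j ∈ s, i ≠ j → (F i).D ∩ (F j).D = ∅ := by
      rintro (t | m) hi (t' | m') hj hij <;>
        apply Set.eq_empty_iff_forall_notMem.mpr <;> rintro u ⟨hu1, hu2⟩
      · exact hu1
      · exact hu1
      · exact hu2
      · -- two children
        have hm := (hmem_cn m).mp (Finset.inr_mem_disjSum.mp hi)
        have hm' := (hmem_cn m').mp (Finset.inr_mem_disjSum.mp hj)
        have hmm : m ≠ m' := fun h => hij (by rw [h])
        rw [show (F (Sum.inr m)).D = (sigHat σ Tr b W n m).D from rfl,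
          sigHat_D σ Tr b W hconn hm.1 hm.2.1 hm.2.2] at hu1
        rw [show (F (Sum.inr m')).D = (sigHat σ Tr b W n m').D from rfl,
          sigHat_D σ Tr b W hconn hm'.1 hm'.2.1 hm'.2.2] at hu2
        obtain ⟨hu1a, hun⟩ := hu1
        obtain ⟨hu2a, -⟩ := hu2
        simp only [Set.mem_iUnion, exists_prop, Set.mem_setOf_eq, Finset.mem_coe] at hu1a hu2a
        obtain ⟨p, ⟨hdp, -⟩, hup⟩ := hu1a
        obtain ⟨p', ⟨hdp', -⟩, hup'⟩ := hu2a
        exact claim_sep Tr b hconn hm.1 hm.2.1 hm'.1 hm'.2.1 hmm hdp hdp' hup hup' hun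
    -- the union of the parts is the substructure at n
    have hunion : unionOf σ.const s F = sigAt σ Tr b W n := by
      refine InterpD.ext' ?_ rfl ?_
      · funext R
        apply Set.eq_of_subset_of_subset
        · intro g hg
          simp only [unionOf, Set.mem_iUnion, exists_prop] at hg
          obtain ⟨i, his, hgi⟩ := hg
          match i with
          | Sum.inl t =>
            have ht := (hmem_tn t).mp (Finset.inl_mem_disjSum.mp his)
            have hgt : (⟨R, g⟩ : Σ R : Sg.Rel, (Fin (Sg.arity R) → U)) = t := hgi
            rw [← hgt] at ht
            exact ⟨ht.1, by rw [ht.2]; exact Tr.desc_refl n⟩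
          | Sum.inr m =>
            have hm := (hmem_cn m).mp (Finset.inr_mem_disjSum.mp his)
            have hgm : g ∈ σ.rel R ∧ Tr.Desc (W R g) m := hgi
            exact ⟨hgm.1, Tr.desc_trans hgm.2 (Tr.child_desc hm.1)⟩
        · rintro g ⟨hg, hdesc⟩
          simp only [unionOf, Set.mem_iUnion, exists_prop]
          by_cases hWn : W R g = n
          · refine ⟨Sum.inl ⟨R, g⟩, ?_, rfl⟩
            exact Finset.inl_mem_disjSum.mpr ((hmem_tn ⟨R, g⟩).mpr ⟨hg, hWn⟩)
          · obtain ⟨m0, hp0, hne0, hd0⟩ := Tr.desc_child hdesc hWn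
            refine ⟨Sum.inr m0, ?_, ⟨hg, hd0⟩⟩
            exact Finset.inr_mem_disjSum.mpr
              ((hmem_cn m0).mpr ⟨hp0, hne0, ⟨R, g, hg, hd0⟩⟩)
      · apply Set.eq_of_subset_of_subset
        · intro u hu
          simp only [unionOf, Set.mem_iUnion, exists_prop] at hu
          obtain ⟨i, his, hui⟩ := hu
          match i with
          | Sum.inl t => exact absurd hui (Set.notMem_empty u)
          | Sum.inr m =>
            have hm := (hmem_cn m).mp (Finset.inr_mem_disjSum.mp his)
            rw [show (F (Sum.inr m)).D = (sigHat σ Tr b W n m).D from rfl,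
              sigHat_D σ Tr b W hconn hm.1 hm.2.1 hm.2.2] at hui
            obtain ⟨hua, hun⟩ := hui
            simp only [Set.mem_iUnion, exists_prop, Set.mem_setOf_eq, Finset.mem_coe] at hua
            obtain ⟨p, ⟨hdp, hkp⟩, hup⟩ := hua
            refine ⟨?_, hun⟩
            simp only [Set.mem_iUnion, exists_prop, Set.mem_setOf_eq, Finset.mem_coe]
            exact ⟨p, ⟨Tr.desc_trans hdp (Tr.child_desc hm.1), hkp⟩, hup⟩
        · rintro u ⟨hua, hun⟩
          simp only [Set.mem_iUnion, exists_prop, Set.mem_setOf_eq, Finset.mem_coe] at hua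
          obtain ⟨p, ⟨hdp, hkp⟩, hup⟩ := hua
          have hpn : p ≠ n := by
            intro h; rw [h] at hup; exact hun hup
          obtain ⟨m0, hp0, hne0, hd0⟩ := Tr.desc_child hdp hpn
          have hkm0 : KeepN σ Tr W m0 := by
            obtain ⟨R, g, hg, hd⟩ := hkp
            exact ⟨R, g, hg, Tr.desc_trans hd hd0⟩
          simp only [unionOf, Set.mem_iUnion, exists_prop]
          refine ⟨Sum.inr m0, ?_, ?_⟩
          · exact Finset.inr_mem_disjSum.mpr ((hmem_cn m0).mpr ⟨hp0, hne0, hkm0⟩)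
          · rw [show (F (Sum.inr m0)).D = (sigHat σ Tr b W n m0).D from rfl,
              sigHat_D σ Tr b W hconn hp0 hne0 hkm0]
            refine ⟨?_, hun⟩
            simp only [Set.mem_iUnion, exists_prop, Set.mem_setOf_eq, Finset.mem_coe]
            exact ⟨p, ⟨hd0, hkp⟩, hup⟩
    have hfp := foldParts σ.const s F act hconsts hdisjR hdisjD hsat
    rw [hunion] at hfp
    rcases hfp with h | ⟨hrel0, -⟩
    · exact h
    · exfalso
      obtain ⟨R, g, hg, hd⟩ := hkeep
      have : g ∈ (sigAt σ Tr b W n).rel R := ⟨hg, hd⟩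
      rw [hrel0 R] at this
      exact this

end PartB4

section PartB5

variable {Sg : Signature} {U : Type}

lemma foldl_const_pos {k : ℕ} (i : Fin (k+1)) :
    ∀ (lv : List U) (a : Fin (k+1) → U) (v : U),
      ((lv ++ [v]).map (fun w => (i, w))).foldl
        (fun a (p : Fin (k+1) × U) => Function.update a p.1 p.2) a
        = Function.update a i v := by
  intro lv
  induction lv with
  | nil => intro a v; rfl
  | cons w lv ih =>
    intro a v
    show ((lv ++ [v]).map (fun w => (i, w))).foldl _ (Function.update a i w) = _
    rw [ih, Function.update_idem]

/-- Part B: a tree decomposition of width at most `k` yields a derivation. -/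
lemma partB {k : ℕ} (σ : InterpD Sg U) (hg : σ.Guarded) (hcard : k + 1 ≤ σ.D.ncard)
    (hne : ∃ R, σ.rel R ≠ ∅) (ν : ℕ → U)
    (T : TreeDecompD σ) (hw : T.width ≤ k) :
    SLRSat (twSID Sg k) σ ν (.pred false (fun a => a.1)) := by
  classical
  set Tr := T.tree with hTr
  haveI : Finite Tr.N := Tr.finN
  -- bags are bounded by k+1
  have hbound : ∀ n, (T.bag n).card ≤ k + 1 := by
    intro n
    have hbdd : BddAbove (Set.range fun n => (T.bag n).card) := (Set.finite_range _).bddAbove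
    have h1 : (T.bag n).card ≤ ⨆ n, (T.bag n).card := le_ciSup hbdd n
    have h2 : (⨆ n, (T.bag n).card) - 1 ≤ k := hw
    omega
  -- prune the bags
  set DF := σ.D_finite.toFinset with hDF
  set b0 : Tr.N → Finset U := fun n => T.bag n ∩ DF with hb0
  have hcov0 : ∀ (R : Sg.Rel) (g : Fin (Sg.arity R) → U), g ∈ σ.rel R →
      ∃ n, ∀ i, g i ∈ b0 n := by
    intro R g hgm
    obtain ⟨n, hn⟩ := T.covers R g hgm
    refine ⟨n, fun i => Finset.mem_inter.mpr ⟨hn i, ?_⟩⟩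
    exact (Set.Finite.mem_toFinset _).mpr (hg ⟨R, g, hgm, ⟨i, rfl⟩⟩)
  have hcovD0 : ∀ u ∈ σ.D, ∃ n, u ∈ b0 n := by
    intro u hu
    obtain ⟨n, hn⟩ := T.coversD u hu
    exact ⟨n, Finset.mem_inter.mpr ⟨hn, (Set.Finite.mem_toFinset _).mpr hu⟩⟩
  have hconn0 : ∀ u, Tr.ConnSubtree {n | u ∈ b0 n} := by
    intro u
    by_cases hu : u ∈ σ.D
    · have hset : {n | u ∈ b0 n} = {n | u ∈ T.bag n} := by
        ext n
        simp only [Set.mem_setOf_eq, hb0, Finset.mem_inter, Set.Finite.mem_toFinset, hDF]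
        exact ⟨fun h => h.1, fun h => ⟨h, hu⟩⟩
      rw [hset]
      exact T.conn u
    · have hset : {n | u ∈ b0 n} = ∅ := by
        apply Set.eq_empty_iff_forall_notMem.mpr
        intro n hn
        exact hu ((Set.Finite.mem_toFinset _).mp (Finset.mem_inter.mp hn).2)
      rw [hset]
      intro h
      exact absurd h Set.not_nonempty_empty
  have hsub0 : ∀ n, (b0 n : Set U) ⊆ σ.D := by
    intro n u hu
    exact (Set.Finite.mem_toFinset _).mp (Finset.mem_inter.mp hu).2
  have hle0 : ∀ n, (b0 n).card ≤ k + 1 :=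
    fun n => le_trans (Finset.card_le_card Finset.inter_subset_left) (hbound n)
  -- smooth the bags
  obtain ⟨b, hcov, hcovD, hconn, hsub, hcardb⟩ :=
    smooth σ k hcard Tr b0 hcov0 hcovD0 hconn0 hsub0 hle0
  -- choose witnesses
  set Wf : (R : Sg.Rel) → (Fin (Sg.arity R) → U) → Tr.N :=
    fun R g => if h : g ∈ σ.rel R then (hcov R g h).choose else Tr.root with hWf
  have hW : ∀ (R : Sg.Rel) (g : Fin (Sg.arity R) → U), g ∈ σ.rel R →
      ∀ i, g i ∈ b (Wf R g) := by
    intro R g hgm i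
    rw [hWf]
    simp only [dif_pos hgm]
    exact (hcov R g hgm).choose_spec i
  -- the root is kept
  obtain ⟨R1, hR1⟩ := hne
  obtain ⟨g1, hg1⟩ := Set.nonempty_iff_ne_empty.mpr hR1
  have hkeepR : KeepN σ Tr Wf Tr.root := ⟨R1, g1, hg1, Tr.desc_root _⟩
  -- enumerate the root bag
  have hcroot : (b Tr.root).card = k + 1 := hcardb Tr.root
  set eR := (b Tr.root).equivFin with heR
  set actR : Fin (k+1) → U := fun j => ((eR.symm (Fin.cast hcroot.symm j)) : U) with hactR
  have hmemR : ∀ j, actR j ∈ b Tr.root := fun j => (eR.symm (Fin.cast hcroot.symm j)).2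
  have hinjR : Function.Injective actR := by
    intro j1 j2 h
    have h2 := eR.symm.injective (Subtype.ext h)
    have h3 := congrArg Fin.val h2
    simp only [Fin.coe_cast] at h3
    exact Fin.ext h3
  have hsurjR : ∀ u ∈ b Tr.root, ∃ j, actR j = u := by
    intro u hu
    refine ⟨Fin.cast hcroot (eR ⟨u, hu⟩), ?_⟩
    show ((eR.symm (Fin.cast hcroot.symm (Fin.cast hcroot (eR ⟨u, hu⟩)))) : U) = u
    have h1 : Fin.cast hcroot.symm (Fin.cast hcroot (eR ⟨u, hu⟩)) = eR ⟨u, hu⟩ :=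
      Fin.ext (by simp)
    rw [h1, Equiv.symm_apply_apply]
  have hrangeR : Set.range actR = (b Tr.root : Set U) := by
    apply Set.eq_of_subset_of_subset
    · rintro u ⟨j, rfl⟩; exact hmemR j
    · intro u hu
      obtain ⟨j, hj⟩ := hsurjR u hu
      exact ⟨j, hj⟩
  -- the main derivation at the root
  have hAS : ASat k (sigAt σ Tr b Wf Tr.root) actR :=
    mainB σ Tr b Wf k hW hconn hcardb ({p | Tr.Desc p Tr.root}.ncard) Tr.root le_rfl
      hkeepR actR hinjR hmemR
  -- simplifications at the root
  have hrelAt : ∀ R, (sigAt σ Tr b Wf Tr.root).rel R = σ.rel R := by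
    intro R
    apply Set.eq_of_subset_of_subset
    · intro g hgm; exact hgm.1
    · intro g hgm; exact ⟨hgm, Tr.desc_root _⟩
  set K : Set U := ⋃ p ∈ {p | KeepN σ Tr Wf p}, (b p : Set U) with hK
  have hDAt : (sigAt σ Tr b Wf Tr.root).D = K \ (b Tr.root : Set U) := by
    show (⋃ p ∈ {p | Tr.Desc p Tr.root ∧ KeepN σ Tr Wf p}, (b p : Set U))
        \ (b Tr.root : Set U) = _
    apply Set.eq_of_subset_of_subset
    · intro u hu
      obtain ⟨hu1, hu2⟩ := hu
      refine ⟨?_, hu2⟩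
      simp only [Set.mem_iUnion, exists_prop, Set.mem_setOf_eq] at hu1
      obtain ⟨p, ⟨-, hk⟩, hp⟩ := hu1
      simp only [hK, Set.mem_iUnion, exists_prop, Set.mem_setOf_eq]
      exact ⟨p, hk, hp⟩
    · intro u hu
      obtain ⟨hu1, hu2⟩ := hu
      refine ⟨?_, hu2⟩
      simp only [hK, Set.mem_iUnion, exists_prop, Set.mem_setOf_eq] at hu1
      obtain ⟨p, hk, hp⟩ := hu1
      simp only [Set.mem_iUnion, exists_prop, Set.mem_setOf_eq]
      exact ⟨p, ⟨Tr.desc_root p, hk⟩, hp⟩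
  have hKD : K ⊆ σ.D := by
    intro u hu
    simp only [hK, Set.mem_iUnion, exists_prop] at hu
    obtain ⟨p, -, hp⟩ := hu
    exact hsub p hp
  have hbK : (b Tr.root : Set U) ⊆ K := by
    intro u hu
    simp only [hK, Set.mem_iUnion, exists_prop]
    exact ⟨Tr.root, hkeepR, hu⟩
  have hbD : (b Tr.root : Set U) ⊆ σ.D := hsub Tr.root
  -- the set of elements to burn
  set BF : Finset U := (σ.D_finite.diff (t := K)).toFinset with hBF
  have hmemBF : ∀ u, u ∈ BF ↔ (u ∈ σ.D ∧ u ∉ K) := by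
    intro u
    rw [hBF, Set.Finite.mem_toFinset]
    exact Iff.rfl
  by_cases hB : BF = ∅
  · -- nothing to burn
    have hDK : σ.D = K := by
      apply Set.eq_of_subset_of_subset _ hKD
      intro u hu
      by_contra hc
      have : u ∈ BF := (hmemBF u).mpr ⟨hu, hc⟩
      rw [hB] at this
      exact absurd this (Finset.notMem_empty u)
    set σq : InterpD Sg U :=
      ⟨⟨σ.rel, σ.rel_finite, σ.const⟩, σ.D \ Set.range actR, σ.D_finite.diff⟩ with hσq
    have hq : ASat k σq actR := by
      refine ASat_congr (σ' := sigAt σ Tr b Wf Tr.root) ?_ rfl ?_ hAS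
      · intro R; exact (hrelAt R).symm
      · show σ.D \ Set.range actR = _
        rw [hDAt, hDK, hrangeR]
    refine ASat_top (σ' := σq) ν hinjR (fun R => rfl) rfl ?_ ?_ hq
    · show σ.D = (σ.D \ Set.range actR) ∪ Set.range actR
      rw [Set.diff_union_of_subset (by rw [hrangeR]; exact hbD)]
    · intro j hc
      exact hc.2 ⟨j, rfl⟩
  · -- burn the superfluous elements along a chain at position 0
    obtain ⟨b1, hb1⟩ := Finset.nonempty_iff_ne_empty.mpr hB
    have hb1D : b1 ∈ σ.D := ((hmemBF b1).mp hb1).1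
    have hb1K : b1 ∉ K := ((hmemBF b1).mp hb1).2
    set x : U := actR 0 with hx
    have hxb : x ∈ b Tr.root := hmemR 0
    have hxK : x ∈ K := hbK hxb
    have hxb1 : x ≠ b1 := fun h => hb1K (h ▸ hxK)
    set rest : Finset U := BF.erase b1 with hrest
    have hrestP : ∀ u ∈ rest, u ∈ σ.D ∧ u ∉ K ∧ u ≠ b1 := by
      intro u hu
      obtain ⟨hne', hu'⟩ := Finset.mem_erase.mp hu
      exact ⟨((hmemBF u).mp hu').1, ((hmemBF u).mp hu').2, hne'⟩
    set act0 : Fin (k+1) → U := Function.update actR 0 b1 with hact0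
    have hinj0 : Function.Injective act0 := by
      intro j1 j2 h
      rw [hact0] at h
      by_cases h1 : j1 = 0 <;> by_cases h2 : j2 = 0
      · rw [h1, h2]
      · exfalso
        rw [h1, Function.update_self, Function.update_of_ne h2] at h
        exact hb1K (hbK (h ▸ hmemR j2))
      · exfalso
        rw [h2, Function.update_self, Function.update_of_ne h1] at h
        exact hb1K (hbK (h ▸ hmemR j1))
      · rw [Function.update_of_ne h1, Function.update_of_ne h2] at h
        exact hinjR h
    have hrange0 : Set.range act0 = {b1} ∪ ((b Tr.root : Set U) \ {x}) := by
      apply Set.eq_of_subset_of_subset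
      · rintro u ⟨j, rfl⟩
        by_cases hj : j = 0
        · subst hj
          rw [hact0, Function.update_self]
          exact Or.inl rfl
        · rw [hact0, Function.update_of_ne hj]
          refine Or.inr ⟨hmemR j, ?_⟩
          intro hc
          exact hj (hinjR hc)
      · rintro u (rfl | ⟨hu1, hu2⟩)
        · exact ⟨0, by rw [hact0, Function.update_self]⟩
        · obtain ⟨j, rfl⟩ := hsurjR u hu1
          have hj : j ≠ 0 := by
            intro h
            exact hu2 (by rw [h]; rfl)
          exact ⟨j, by rw [hact0, Function.update_of_ne hj]⟩
    have hrange0D : Set.range act0 ⊆ σ.D := by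
      rw [hrange0]
      rintro u (rfl | ⟨hu1, -⟩)
      · exact hb1D
      · exact hbD hu1
    set σq : InterpD Sg U :=
      ⟨⟨σ.rel, σ.rel_finite, σ.const⟩, σ.D \ Set.range act0, σ.D_finite.diff⟩ with hσq
    set cl : List (Fin (k+1) × U) :=
      ((rest.toList ++ [x]).map (fun v => ((0 : Fin (k+1)), v))) with hcl
    have hclvals : cl.map Prod.snd = rest.toList ++ [x] := by
      rw [hcl, List.map_map]
      simp
    have hq : ASat k σq act0 := by
      refine ASat_chain cl σq (sigAt σ Tr b Wf Tr.root) act0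
        (fun R => (hrelAt R).symm) rfl ?_ ?_ ?_ ?_
      · -- domain decomposition
        show σ.D \ Set.range act0 = _ ∪ _
        rw [hDAt, hrange0]
        apply Set.eq_of_subset_of_subset
        · rintro u ⟨huD, hur⟩
          simp only [Set.mem_union, Set.mem_singleton_iff, Set.mem_diff] at hur
          push_neg at hur
          obtain ⟨hub1, hur2⟩ := hur
          by_cases huK : u ∈ K
          · by_cases hub : u ∈ (b Tr.root : Set U)
            · have hux : u = x := hur2 hub
              right
              rw [hclvals]
              simp [hux]
            · exact Or.inl ⟨huK, hub⟩
          · right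
            rw [hclvals]
            simp only [Set.mem_setOf_eq, List.mem_append, List.mem_singleton,
              Finset.mem_toList]
            left
            exact Finset.mem_erase.mpr ⟨hub1, (hmemBF u).mpr ⟨huD, huK⟩⟩
        · intro u hu
          rcases hu with ⟨huK, hub⟩ | hu
          · refine ⟨hKD huK, ?_⟩
            simp only [Set.mem_union, Set.mem_singleton_iff, Set.mem_diff]
            push_neg
            refine ⟨fun h => hb1K (h ▸ huK), fun h => absurd h hub⟩
          · rw [hclvals] at hu
            simp only [Set.mem_setOf_eq, List.mem_append, List.mem_singleton,
              Finset.mem_toList] at hu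
            rcases hu with hu | rfl
            · obtain ⟨huD, huK, hub1⟩ := hrestP u hu
              refine ⟨huD, ?_⟩
              simp only [Set.mem_union, Set.mem_singleton_iff, Set.mem_diff]
              push_neg
              exact ⟨hub1, fun h => absurd (hbK h) huK⟩
            · refine ⟨hbD hxb, ?_⟩
              simp only [Set.mem_union, Set.mem_singleton_iff, Set.mem_diff]
              push_neg
              refine ⟨hxb1, ?_⟩
              intro _h
              simp
      · -- burned values are outside the remaining domain
        intro p hp
        rw [hcl] at hp
        obtain ⟨v, hv, rfl⟩ := List.mem_map.mp hp
        show v ∉ (sigAt σ Tr b Wf Tr.root).D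
        rw [hDAt]
        rw [List.mem_append, List.mem_singleton] at hv
        rcases hv with hv | hvx
        · obtain ⟨-, hvK, -⟩ := hrestP v (Finset.mem_toList.mp hv)
          exact fun hc => hvK hc.1
        · subst hvx
          exact fun hc => hc.2 hxb
      · -- burned values are pairwise distinct
        rw [hclvals, List.nodup_append]
        refine ⟨Finset.nodup_toList _, List.nodup_singleton x, ?_⟩
        intro v hv _ hvx rfl
        rw [List.mem_singleton] at hvx
        subst hvx
        obtain ⟨-, hvK, -⟩ := hrestP x (Finset.mem_toList.mp hv)
        exact hvK hxK
      · -- the chain ends at the root enumeration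
        have hfold : (cl.foldl (fun a (p : Fin (k+1) × U) => Function.update a p.1 p.2) act0)
            = actR := by
          rw [hcl, foldl_const_pos, hact0, Function.update_idem, hx,
            Function.update_eq_self]
        rw [hfold]
        exact hAS
    refine ASat_top (σ' := σq) ν hinj0 (fun R => rfl) rfl ?_ ?_ hq
    · show σ.D = (σ.D \ Set.range act0) ∪ Set.range act0
      rw [Set.diff_union_of_subset hrange0D]
    · intro j hc
      exact hc.2 ⟨j, rfl⟩

end PartB5
/-- Lemma `k-sid`. -/
theorem k_sid {Sg : Signature} {U : Type} [Infinite U] (k : ℕ) (hk : 1 ≤ k)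
    (σ : InterpD Sg U) (hg : σ.Guarded) (hcard : k + 1 ≤ σ.D.ncard)
    (hne : ∃ R, σ.rel R ≠ ∅) (ν : ℕ → U) :
    (∃ T : TreeDecompD σ, T.width ≤ k) ↔
      SLRSat (twSID Sg k) σ ν (.pred false (fun a => a.1)) := by
  constructor
  · rintro ⟨T, hw⟩
    exact partB σ hg hcard hne ν T hw
  · intro h
    exact partA h
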